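/- arXiv:2008.07212 — 6 statements merged into one kernel-verified Lean document; each statement's English description precedes it below -/
import Mathlib

section
/- Let 1 ≤ m ≤ n and ∅ ≠ A ⊆ [m], and set D = 𝔽₂ⁿ ∖ {x ∈ 𝔽₂ⁿ : supp(x) ⊆ A}. Then |D| = 2ⁿ − 2^{|A|}; wt(c_{D,0}) = 0; for every nonzero u ∈ 𝔽₂ⁿ, wt(c_{D,u}) = 2^{n−1} if supp(u) ∩ A = ∅ and wt(c_{D,u}) = 2^{n−1} − 2^{|A|−1} otherwise. Consequently exactly 2^{n−|A|} − 1 nonzero vectors u give weight 2^{n−1} and exactly 2ⁿ − 2^{n−|A|} vectors u give weight 2^{n−1} − 2^{|A|−1}. -/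
open Finset

/-- The order relation of the hierarchical poset `ℍ(m,n)` on `Fin n`:
`i ⪯ j` iff `i = j`, or `i` lies in the bottom level `[m]` and `j` in the top level. -/
def Hle (n m : ℕ) (i j : Fin n) : Prop :=
  i = j ∨ ((i : ℕ) < m ∧ m ≤ (j : ℕ))

instance (n m : ℕ) : DecidableRel (Hle n m) := fun i j =>
  decidable_of_iff (i = j ∨ ((i : ℕ) < m ∧ m ≤ (j : ℕ))) Iff.rfl

/-- Down-closed subsets of the hierarchical poset `ℍ(m,n)`. -/
def HDownClosed (n m : ℕ) (S : Finset (Fin n)) : Prop :=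
  ∀ i j : Fin n, Hle n m i j → j ∈ S → i ∈ S

instance (n m : ℕ) : DecidablePred (HDownClosed n m) := fun S =>
  decidable_of_iff (∀ i j : Fin n, Hle n m i j → j ∈ S → i ∈ S) Iff.rfl

/-- The bottom level `[m]` of `ℍ(m,n)`, viewed inside `Fin n`. -/
def lowSet (n m : ℕ) : Finset (Fin n) :=
  Finset.univ.filter (fun i => (i : ℕ) < m)

/-- The support of a vector of `𝔽₂ⁿ`, as a subset of `[n]`. -/
def supp {n : ℕ} (x : Fin n → ZMod 2) : Finset (Fin n) :=
  Finset.univ.filter (fun i => x i ≠ 0)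

/-- The standard inner product on `𝔽₂ⁿ`. -/
def ip {n : ℕ} (u x : Fin n → ZMod 2) : ZMod 2 := ∑ i, u i * x i

/-- The Hamming weight of the codeword `c_{D,u} = (u·x)_{x ∈ D}`. -/
def wtD {n : ℕ} (D : Finset (Fin n → ZMod 2)) (u : Fin n → ZMod 2) : ℕ :=
  (D.filter (fun x => ip u x = 1)).card

/-- The Hamming weight of the codeword `c_f(s,u) = (s·f(x) + u·x)_{x ∈ 𝔽₂ⁿ ∖ {0}}`. -/
def wtF {n : ℕ} (f : (Fin n → ZMod 2) → ZMod 2) (s : ZMod 2) (u : Fin n → ZMod 2) : ℕ :=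
  (Finset.univ.filter (fun x : Fin n → ZMod 2 => x ≠ 0 ∧ s * f x + ip u x = 1)).card

/-- The Hamming weight of the first `m` coordinates of `u` (the part `v` of `u = (v,w)`). -/
def wtLow (n m : ℕ) (u : Fin n → ZMod 2) : ℕ :=
  (Finset.univ.filter (fun i : Fin n => (i : ℕ) < m ∧ u i ≠ 0)).card

/-! Let `V = {x : supp x ⊆ A}`, a subspace with `2^|A|` elements, so that `D = 𝔽₂ⁿ ∖ V` and
`wt(c_{D,u}) = #{x : u·x = 1} - #{x ∈ V : u·x = 1}`. A set stable under translation by some `v`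
with `u·v = 1` is split in half by `x ↦ u·x`, since that translation swaps the two level sets.
Taking `v = e_i` with `u_i = 1` gives `2^{n-1}` for the first term, and, when `i` can be chosen in
`A`, `2^{|A|-1}` for the second; if `u` vanishes on `A` the second term is `0`. The frequencies
then count the vectors `u` supported in the complement of `A`. -/

section Weights

variable {n : ℕ}

lemma ZMod.ne_zero_iff_eq_one_mod_two : ∀ {a : ZMod 2}, a ≠ 0 ↔ a = 1 := by decide

lemma ip_add_right (u x y : Fin n → ZMod 2) : ip u (x + y) = ip u x + ip u y := by
  simp only [ip, Pi.add_apply, mul_add, sum_add_distrib]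

lemma ip_single_one (u : Fin n → ZMod 2) (i : Fin n) : ip u (Pi.single i 1) = u i := by
  simp [ip, Pi.single_apply]

lemma ip_eq_zero_of_disjoint {u x : Fin n → ZMod 2} (h : Disjoint (supp u) (supp x)) :
    ip u x = 0 := by
  refine sum_eq_zero fun i _ => ?_
  by_contra hi
  exact disjoint_left.1 h (by simpa [supp] using left_ne_zero_of_mul hi)
    (by simpa [supp] using right_ne_zero_of_mul hi)

lemma supp_subset_iff {x : Fin n → ZMod 2} {A : Finset (Fin n)} :
    supp x ⊆ A ↔ ∀ i ∉ A, x i = 0 := by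
  simp only [supp, subset_iff, mem_filter, mem_univ, true_and]
  exact forall_congr' fun i => not_imp_comm

lemma supp_add_single_subset (x : Fin n → ZMod 2) (i : Fin n) :
    supp (x + Pi.single i 1) ⊆ insert i (supp x) := by
  intro j hj
  by_cases hji : j = i
  · simp [hji]
  · simpa [supp, hji] using hj

lemma card_filter_supp_subset (A : Finset (Fin n)) :
    #(univ.filter fun x : Fin n → ZMod 2 => supp x ⊆ A) = 2 ^ #A := by
  have : (univ.filter fun x : Fin n → ZMod 2 => supp x ⊆ A) =
      Fintype.piFinset fun i => if i ∈ A then univ else {0} := by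
    ext x
    simp only [mem_filter, mem_univ, true_and, supp_subset_iff, Fintype.mem_piFinset]
    refine forall_congr' fun i => ?_
    split_ifs <;> simp_all
  rw [this, Fintype.card_piFinset]
  simp [apply_ite card]

lemma two_mul_wtD_of_add_mem {u v : Fin n → ZMod 2} (huv : ip u v = 1)
    {S : Finset (Fin n → ZMod 2)} (hS : ∀ x ∈ S, x + v ∈ S) :
    2 * wtD S u = #S := by
  have hswap : wtD S u = #(S.filter fun x => ¬ ip u x = 1) := by
    refine card_equiv (Equiv.addRight v) fun x => ?_
    have hS' : x + v ∈ S → x ∈ S := fun h => by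
      simpa [add_assoc, ZModModule.add_self] using hS _ h
    simp only [mem_filter, Equiv.coe_addRight, ip_add_right, huv, add_eq_right]
    rw [← ne_eq, ZMod.ne_zero_iff_eq_one_mod_two]
    exact and_congr_left fun _ => ⟨hS x, hS'⟩
  rw [two_mul]
  nth_rewrite 2 [hswap]
  exact card_filter_add_card_filter_not _

lemma wtD_univ_of_ne_zero {u : Fin n → ZMod 2} (hu : u ≠ 0) : wtD univ u = 2 ^ (n - 1) := by
  obtain ⟨i, hi⟩ := Function.ne_iff.mp hu
  have h := two_mul_wtD_of_add_mem (S := univ) (v := Pi.single i 1)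
    (by rwa [ip_single_one, ← ZMod.ne_zero_iff_eq_one_mod_two]) fun _ _ => mem_univ _
  rw [card_univ, Fintype.card_fun, ZMod.card, Fintype.card_fin,
    ← mul_pow_sub_one (Fin.pos i).ne'] at h
  exact Nat.eq_of_mul_eq_mul_left two_pos h

lemma wtD_filter_supp_subset_of_disjoint {u : Fin n → ZMod 2} {A : Finset (Fin n)}
    (h : Disjoint (supp u) A) : wtD (univ.filter fun x => supp x ⊆ A) u = 0 := by
  refine card_eq_zero.2 (filter_eq_empty_iff.2 fun x hx => ?_)
  rw [ip_eq_zero_of_disjoint (h.mono_right (mem_filter.1 hx).2)]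
  decide

lemma wtD_filter_supp_subset_of_not_disjoint {u : Fin n → ZMod 2} {A : Finset (Fin n)}
    (h : ¬ Disjoint (supp u) A) :
    wtD (univ.filter fun x => supp x ⊆ A) u = 2 ^ (#A - 1) := by
  obtain ⟨i, hiu, hiA⟩ := not_disjoint_iff.1 h
  have h := two_mul_wtD_of_add_mem (S := univ.filter fun x => supp x ⊆ A) (v := Pi.single i 1)
    (by simpa [ip_single_one, ← ZMod.ne_zero_iff_eq_one_mod_two, supp] using hiu)
    fun x hx => (mem_filter_univ _).2 <| (supp_add_single_subset x i).trans <|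
      insert_subset hiA ((mem_filter_univ x).1 hx)
  rw [card_filter_supp_subset, ← mul_pow_sub_one (card_pos.2 ⟨i, hiA⟩).ne'] at h
  exact Nat.eq_of_mul_eq_mul_left two_pos h

lemma wtD_filter_not_add_wtD_filter (S : Finset (Fin n → ZMod 2)) (p : (Fin n → ZMod 2) → Prop)
    [DecidablePred p] (u : Fin n → ZMod 2) :
    wtD (S.filter fun x => ¬ p x) u + wtD (S.filter p) u = wtD S u := by
  simp only [wtD, filter_comm _ (fun x => ip u x = 1)]
  rw [add_comm]
  exact card_filter_add_card_filter_not _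

lemma card_filter_not_supp_subset (A : Finset (Fin n)) :
    #(univ.filter fun x : Fin n → ZMod 2 => ¬ supp x ⊆ A) = 2 ^ n - 2 ^ #A := by
  have h := card_filter_add_card_filter_not (s := (univ : Finset (Fin n → ZMod 2)))
    (fun x => supp x ⊆ A)
  rw [card_filter_supp_subset, card_univ, Fintype.card_fun, ZMod.card, Fintype.card_fin] at h
  omega

lemma wtD_filter_not_supp_subset_of_disjoint {u : Fin n → ZMod 2} (hu : u ≠ 0)
    {A : Finset (Fin n)} (h : Disjoint (supp u) A) :
    wtD (univ.filter fun x => ¬ supp x ⊆ A) u = 2 ^ (n - 1) := by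
  have := wtD_filter_not_add_wtD_filter univ (fun x => supp x ⊆ A) u
  rwa [wtD_filter_supp_subset_of_disjoint h, wtD_univ_of_ne_zero hu, add_zero] at this

lemma wtD_filter_not_supp_subset_of_not_disjoint {u : Fin n → ZMod 2} (hu : u ≠ 0)
    {A : Finset (Fin n)} (h : ¬ Disjoint (supp u) A) :
    wtD (univ.filter fun x => ¬ supp x ⊆ A) u = 2 ^ (n - 1) - 2 ^ (#A - 1) := by
  have := wtD_filter_not_add_wtD_filter univ (fun x => supp x ⊆ A) u
  rw [wtD_filter_supp_subset_of_not_disjoint h, wtD_univ_of_ne_zero hu] at this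
  omega

lemma filter_wtD_eq_two_pow_pred (A : Finset (Fin n)) :
    (univ.filter fun u => u ≠ 0 ∧
      wtD (univ.filter fun x => ¬ supp x ⊆ A) u = 2 ^ (n - 1)) =
    (univ.filter fun u => supp u ⊆ Aᶜ).erase 0 := by
  ext u
  simp only [mem_erase, mem_filter_univ, subset_compl_iff_disjoint_right]
  refine and_congr_right fun hu => ⟨fun hw => by_contra fun h => ?_,
    wtD_filter_not_supp_subset_of_disjoint hu⟩
  rw [wtD_filter_not_supp_subset_of_not_disjoint hu h] at hw
  exact (Nat.sub_lt (by positivity) (by positivity)).ne hw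

lemma filter_wtD_eq_two_pow_pred_sub (A : Finset (Fin n)) :
    (univ.filter fun u => u ≠ 0 ∧
      wtD (univ.filter fun x => ¬ supp x ⊆ A) u = 2 ^ (n - 1) - 2 ^ (#A - 1)) =
    univ.filter fun u => ¬ supp u ⊆ Aᶜ := by
  ext u
  simp only [mem_filter_univ, subset_compl_iff_disjoint_right]
  refine ⟨fun ⟨hu, hw⟩ h => ?_, fun h => ?_⟩
  · rw [wtD_filter_not_supp_subset_of_disjoint hu h] at hw
    exact (Nat.sub_lt (by positivity) (by positivity)).ne hw.symm
  · have hu : u ≠ 0 := by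
      rintro rfl
      simp [supp] at h
    exact ⟨hu, wtD_filter_not_supp_subset_of_not_disjoint hu h⟩

end Weights

theorem stmt_4_general (n : ℕ)
    (A : Finset (Fin n))
    (D : Finset (Fin n → ZMod 2))
    (hD : D = Finset.univ.filter (fun x => ¬ supp x ⊆ A)) :
    D.card = 2 ^ n - 2 ^ A.card
    ∧ wtD D 0 = 0
    ∧ (∀ u : Fin n → ZMod 2, u ≠ 0 →
        (supp u ∩ A = ∅ → wtD D u = 2 ^ (n - 1)) ∧
        (supp u ∩ A ≠ ∅ → wtD D u = 2 ^ (n - 1) - 2 ^ (A.card - 1)))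
    ∧ (Finset.univ.filter
        (fun u : Fin n → ZMod 2 => u ≠ 0 ∧ wtD D u = 2 ^ (n - 1))).card
        = 2 ^ (n - A.card) - 1
    ∧ (Finset.univ.filter
        (fun u : Fin n → ZMod 2 =>
          u ≠ 0 ∧ wtD D u = 2 ^ (n - 1) - 2 ^ (A.card - 1))).card
        = 2 ^ n - 2 ^ (n - A.card) := by
  subst hD
  have hcompl : #Aᶜ = n - #A := by rw [card_compl, Fintype.card_fin]
  refine ⟨card_filter_not_supp_subset A, by simp [wtD, ip], fun u hu => ⟨fun h => ?_, fun h => ?_⟩,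
    ?_, ?_⟩
  · exact wtD_filter_not_supp_subset_of_disjoint hu (disjoint_iff_inter_eq_empty.2 h)
  · exact wtD_filter_not_supp_subset_of_not_disjoint hu (disjoint_iff_inter_eq_empty.not.2 h)
  · rw [filter_wtD_eq_two_pow_pred, card_erase_of_mem (by simp [supp]), card_filter_supp_subset,
      hcompl]
  · rw [filter_wtD_eq_two_pow_pred_sub, card_filter_not_supp_subset, hcompl]

/-- **Theorem 5.1(1).**  For `∅ ≠ A ⊆ [m]` and
`D = 𝔽₂ⁿ ∖ {x : supp(x) ⊆ A}`: the length is `|D| = 2ⁿ − 2^{|A|}`, the zero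
codeword has weight `0`, and for nonzero `u` the weight of `c_{D,u}` is `2^{n−1}`
when `supp(u) ∩ A = ∅` and `2^{n−1} − 2^{|A|−1}` otherwise; the two nonzero weights
occur with frequencies `2^{n−|A|} − 1` and `2ⁿ − 2^{n−|A|}` respectively. -/
theorem stmt_4 (n m : ℕ) (hm : 1 ≤ m) (hmn : m ≤ n)
    (A : Finset (Fin n)) (hAne : A.Nonempty) (hA : ∀ i ∈ A, (i : ℕ) < m)
    (D : Finset (Fin n → ZMod 2))
    (hD : D = Finset.univ.filter (fun x => ¬ supp x ⊆ A)) :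
    D.card = 2 ^ n - 2 ^ A.card
    ∧ wtD D 0 = 0
    ∧ (∀ u : Fin n → ZMod 2, u ≠ 0 →
        (supp u ∩ A = ∅ → wtD D u = 2 ^ (n - 1)) ∧
        (supp u ∩ A ≠ ∅ → wtD D u = 2 ^ (n - 1) - 2 ^ (A.card - 1)))
    ∧ (Finset.univ.filter
        (fun u : Fin n → ZMod 2 => u ≠ 0 ∧ wtD D u = 2 ^ (n - 1))).card
        = 2 ^ (n - A.card) - 1
    ∧ (Finset.univ.filter
        (fun u : Fin n → ZMod 2 =>
          u ≠ 0 ∧ wtD D u = 2 ^ (n - 1) - 2 ^ (A.card - 1))).card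
        = 2 ^ n - 2 ^ (n - A.card) :=
  stmt_4_general n A D hD
end

section
/- Let 1 ≤ m < n, ∅ ≠ B ⊆ [n]∖[m], and set D = {x ∈ 𝔽₂ⁿ : supp(x) is not a down-closed subset of ℍ(m,n) contained in [m] ∪ B}. Then |D| = 2ⁿ − 2^m − 2^{|B|} + 1, and for every nonzero u = (v,w) ∈ 𝔽₂ⁿ one has 2·wt(c_{D,u}) = |D| + 2^m·χ₀ + (−1)^{wt(v)}·(2^{|B|}·χ_B − 1), where χ₀ = 1 if v = 0 and 0 otherwise, and χ_B = 1 if supp(w) ∩ B = ∅ and 0 otherwise. In particular, for nonzero u: if v = 0 then wt(c_{D,u}) equals 2^{n−1} (when supp(w)∩B=∅) or 2^{n−1} − 2^{|B|−1}; if wt(v) is odd it equals 2^{n−1}+1−2^{m−1}−2^{|B|} (when supp(w)∩B=∅) or 2^{n−1}+1−2^{m−1}−2^{|B|−1}; if v ≠ 0 and wt(v) is even it equals 2^{n−1}−2^{m−1} (when supp(w)∩B=∅) or 2^{n−1}−2^{m−1}−2^{|B|−1}. -/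
open Finset

lemma zmod2_eq_one_of_ne_zero : ∀ {a : ZMod 2}, a ≠ 0 → a = 1 := by decide

lemma supp_injective {n : ℕ} : Function.Injective (supp (n := n)) := by
  intro x y h
  funext i
  have h1 : x i ≠ 0 ↔ y i ≠ 0 := by
    constructor <;> intro hx
    · have : i ∈ supp x := by simp [supp, hx]
      rw [h] at this; simpa [supp] using this
    · have : i ∈ supp y := by simp [supp, hx]
      rw [← h] at this; simpa [supp] using this
  rcases eq_or_ne (x i) 0 with h0 | h0
  · have : ¬ y i ≠ 0 := fun hy => (h1.mpr hy) h0
    rw [h0, not_not.mp this]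
  · rw [zmod2_eq_one_of_ne_zero h0, zmod2_eq_one_of_ne_zero (h1.mp h0)]

def indic {n : ℕ} (S : Finset (Fin n)) : Fin n → ZMod 2 := fun i => if i ∈ S then 1 else 0

lemma supp_indic {n : ℕ} (S : Finset (Fin n)) : supp (indic S) = S := by
  ext i; by_cases h : i ∈ S <;> simp [supp, indic, h]

lemma card_vec {n : ℕ} (p : Finset (Fin n) → Prop) [DecidablePred p] :
    (univ.filter (fun x : Fin n → ZMod 2 => p (supp x))).card
      = ((univ : Finset (Finset (Fin n))).filter p).card := by
  apply Finset.card_bij (fun x _ => supp x)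
  · intro x hx; simp only [Finset.mem_filter, Finset.mem_univ, true_and] at hx ⊢; exact hx
  · intro x _ y _ h; exact supp_injective h
  · intro S hS
    refine ⟨indic S, ?_, supp_indic S⟩
    simp only [Finset.mem_filter, Finset.mem_univ, true_and] at hS ⊢
    rwa [supp_indic]

lemma ip_eq_sum {n : ℕ} (u x : Fin n → ZMod 2) : ip u x = ∑ i ∈ supp x, u i := by
  rw [ip, supp, Finset.sum_filter]
  apply Finset.sum_congr rfl
  intro i _
  rcases eq_or_ne (x i) 0 with h | h
  · simp [h]
  · simp [h, zmod2_eq_one_of_ne_zero h]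

lemma two_pow_pred_add {k : ℕ} (h : 1 ≤ k) : 2^(k-1) + 2^(k-1) = 2^k := by
  obtain ⟨j, rfl⟩ : ∃ j, k = j + 1 := ⟨k - 1, by omega⟩
  simp [pow_succ, mul_two]

lemma count_sum {n : ℕ} (u : Fin n → ZMod 2) (F : Finset (Fin n)) (t : ZMod 2) :
    (F.powerset.filter (fun S => ∑ i ∈ S, u i = t)).card =
      if ∀ i ∈ F, u i = 0 then (if t = 0 then 2 ^ F.card else 0) else 2 ^ (F.card - 1) := by
  classical
  induction F using Finset.induction_on generalizing t with
  | empty =>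
      simp only [Finset.powerset_empty, Finset.card_empty]
      by_cases ht : t = 0 <;> simp [Finset.filter_singleton, ht, eq_comm]
  | @insert a F ha ih =>
      have hnotmem : ∀ S ∈ F.powerset, a ∉ S := fun S hS =>
        fun hmem => ha (Finset.mem_powerset.mp hS hmem)
      have hdis : Disjoint (F.powerset.filter (fun S => ∑ i ∈ S, u i = t))
          ((F.powerset.image (insert a)).filter (fun S => ∑ i ∈ S, u i = t)) := by
        rw [Finset.disjoint_left]
        intro S h1 h2
        rcases Finset.mem_image.mp (Finset.mem_of_mem_filter S h2) with ⟨T, hT, hTS⟩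
        have haS : a ∈ S := hTS ▸ Finset.mem_insert_self a T
        exact hnotmem S (Finset.mem_of_mem_filter S h1) haS
      rw [Finset.powerset_insert, Finset.filter_union, Finset.card_union_of_disjoint hdis,
        Finset.filter_image]
      rw [Finset.card_image_of_injOn (by
        intro S1 h1 S2 h2 h
        have h1' : a ∉ S1 := hnotmem S1 (Finset.mem_of_mem_filter _ (Finset.mem_coe.mp h1))
        have h2' : a ∉ S2 := hnotmem S2 (Finset.mem_of_mem_filter _ (Finset.mem_coe.mp h2))
        rw [← Finset.erase_insert h1', ← Finset.erase_insert h2', h])]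
      have hfc : F.powerset.filter (fun S => ∑ i ∈ insert a S, u i = t)
          = F.powerset.filter (fun S => ∑ i ∈ S, u i = t - u a) := by
        apply Finset.filter_congr
        intro S hS
        rw [Finset.sum_insert (hnotmem S hS)]
        constructor
        · intro h; rw [← h]; ring
        · intro h; rw [h]; ring
      rw [hfc, ih, ih]
      rw [Finset.card_insert_of_notMem ha]
      simp only [Finset.forall_mem_insert, Nat.add_sub_cancel]
      by_cases hua : u a = 0
      · by_cases hF : ∀ i ∈ F, u i = 0
        · have hcond : u a = 0 ∧ ∀ i ∈ F, u i = 0 := ⟨hua, hF⟩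
          rw [if_pos hcond, if_pos hF, if_pos hF, hua, sub_zero]
          by_cases ht : t = 0
          · rw [if_pos ht, if_pos ht, pow_succ, mul_two]
          · rw [if_neg ht, if_neg ht]
        · have hcond : ¬ (u a = 0 ∧ ∀ i ∈ F, u i = 0) := fun h => hF h.2
          have hFc : F.Nonempty := by
            push_neg at hF; rcases hF with ⟨i, hi, _⟩; exact ⟨i, hi⟩
          have hc1 : 1 ≤ F.card := Finset.card_pos.mpr hFc
          rw [if_neg hcond, if_neg hF, if_neg hF]
          exact two_pow_pred_add hc1
      · have hcond : ¬ (u a = 0 ∧ ∀ i ∈ F, u i = 0) := fun h => hua h.1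
        rw [if_neg hcond]
        have hua1 : u a = 1 := zmod2_eq_one_of_ne_zero hua
        by_cases hF : ∀ i ∈ F, u i = 0
        · rw [if_pos hF, if_pos hF]
          rcases (by decide : ∀ b : ZMod 2, b = 0 ∨ b = 1) t with ht | ht
          · have h2 : t - u a ≠ 0 := by rw [ht, hua1]; decide
            rw [if_pos ht, if_neg h2, Nat.add_zero]
          · have h2 : t - u a = 0 := by rw [ht, hua1]; decide
            have h3 : t ≠ 0 := by rw [ht]; decide
            rw [if_neg h3, if_pos h2, Nat.zero_add]
        · have hFc : F.Nonempty := by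
            push_neg at hF; rcases hF with ⟨i, hi, _⟩; exact ⟨i, hi⟩
          have hc1 : 1 ≤ F.card := Finset.card_pos.mpr hFc
          rw [if_neg hF, if_neg hF]
          exact two_pow_pred_add hc1

lemma lowSet_card (n m : ℕ) (h : m ≤ n) : (lowSet n m).card = m := by
  have key : (lowSet n m).card = (Finset.range m).card := by
    rw [lowSet]
    refine Finset.card_bij (fun i _ => (i : ℕ)) ?_ ?_ ?_
    · intro i hi
      simp only [Finset.mem_filter, Finset.mem_univ, true_and] at hi
      exact Finset.mem_range.mpr hi
    · intro i _ j _ hij; exact Fin.val_injective hij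
    · intro k hk
      have hk' : k < m := Finset.mem_range.mp hk
      exact ⟨⟨k, lt_of_lt_of_le hk' h⟩, Finset.mem_filter.mpr ⟨Finset.mem_univ _, hk'⟩, rfl⟩
  rw [key, Finset.card_range]

lemma P_filter_eq (n m : ℕ) (B : Finset (Fin n)) (hB : ∀ j ∈ B, m ≤ (j:ℕ))
    (q : Finset (Fin n) → Prop) [DecidablePred q] :
    (univ.filter (fun S => (HDownClosed n m S ∧ S ⊆ lowSet n m ∪ B) ∧ q S))
      = (lowSet n m).powerset.filter q
        ∪ (B.powerset.filter (fun T => T.Nonempty ∧ q (lowSet n m ∪ T))).image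
            (fun T => lowSet n m ∪ T) := by
  ext S
  simp only [Finset.mem_filter, Finset.mem_univ, true_and, Finset.mem_union,
    Finset.mem_powerset, Finset.mem_image]
  constructor
  · rintro ⟨⟨hdc, hsub⟩, hq⟩
    by_cases hlow : S ⊆ lowSet n m
    · exact Or.inl ⟨hlow, hq⟩
    · right
      obtain ⟨j, hjS, hjlow⟩ := Finset.not_subset.mp hlow
      have hjm : m ≤ (j:ℕ) := by
        by_contra h
        exact hjlow (Finset.mem_filter.mpr ⟨Finset.mem_univ _, by omega⟩)
      have hlowS : lowSet n m ⊆ S := by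
        intro i hi
        have him : (i:ℕ) < m := (Finset.mem_filter.mp hi).2
        exact hdc i j (Or.inr ⟨him, hjm⟩) hjS
      refine ⟨S \ lowSet n m, ⟨?_, ⟨j, Finset.mem_sdiff.mpr ⟨hjS, hjlow⟩⟩, ?_⟩, ?_⟩
      · intro k hk
        obtain ⟨hkS, hklow⟩ := Finset.mem_sdiff.mp hk
        rcases Finset.mem_union.mp (hsub hkS) with h | h
        · exact absurd h hklow
        · exact h
      · rwa [Finset.union_sdiff_of_subset hlowS]
      · exact Finset.union_sdiff_of_subset hlowS
  · rintro (⟨hsub, hq⟩ | ⟨T, ⟨hTB, hTne, hq⟩, rfl⟩)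
    · refine ⟨⟨?_, hsub.trans Finset.subset_union_left⟩, hq⟩
      intro i j hle hj
      rcases hle with rfl | ⟨him, hjm⟩
      · exact hj
      · have := (Finset.mem_filter.mp (hsub hj)).2
        omega
    · refine ⟨⟨?_, Finset.union_subset_union (Finset.Subset.refl _) hTB⟩, hq⟩
      intro i j hle hj
      rcases hle with rfl | ⟨him, hjm⟩
      · exact hj
      · exact Finset.mem_union_left _ (Finset.mem_filter.mpr ⟨Finset.mem_univ _, him⟩)

lemma card_P_filter (n m : ℕ) (B : Finset (Fin n)) (hB : ∀ j ∈ B, m ≤ (j:ℕ))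
    (q : Finset (Fin n) → Prop) [DecidablePred q] :
    (univ.filter (fun S => (HDownClosed n m S ∧ S ⊆ lowSet n m ∪ B) ∧ q S)).card
      = ((lowSet n m).powerset.filter q).card
        + (B.powerset.filter (fun T => T.Nonempty ∧ q (lowSet n m ∪ T))).card := by
  have hdisj : Disjoint ((lowSet n m).powerset.filter q)
      ((B.powerset.filter (fun T => T.Nonempty ∧ q (lowSet n m ∪ T))).image
        (fun T => lowSet n m ∪ T)) := by
    rw [Finset.disjoint_left]
    intro S h1 h2
    obtain ⟨T, hT, rfl⟩ := Finset.mem_image.mp h2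
    obtain ⟨hTB, ⟨j, hj⟩, _⟩ := Finset.mem_filter.mp hT
    have hsub : lowSet n m ∪ T ⊆ lowSet n m :=
      Finset.mem_powerset.mp (Finset.mem_filter.mp h1).1
    have hjm : m ≤ (j:ℕ) := hB j (Finset.mem_powerset.mp hTB hj)
    have : j ∈ lowSet n m := hsub (Finset.mem_union_right _ hj)
    have := (Finset.mem_filter.mp this).2
    omega
  rw [P_filter_eq n m B hB q, Finset.card_union_of_disjoint hdisj,
    Finset.card_image_of_injOn (by
      intro T1 h1 T2 h2 h
      have h1B : T1 ⊆ B := Finset.mem_powerset.mp (Finset.mem_filter.mp (Finset.mem_coe.mp h1)).1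
      have h2B : T2 ⊆ B := Finset.mem_powerset.mp (Finset.mem_filter.mp (Finset.mem_coe.mp h2)).1
      have key : ∀ (T T' : Finset (Fin n)), T ⊆ B → T' ⊆ B →
          lowSet n m ∪ T = lowSet n m ∪ T' → ∀ j ∈ T, j ∈ T' := by
        intro T T' hTB hT'B heq j hj
        have : j ∈ lowSet n m ∪ T' := heq ▸ Finset.mem_union_right _ hj
        rcases Finset.mem_union.mp this with h | h
        · have h1 := (Finset.mem_filter.mp h).2
          have h2 := hB j (hTB hj)
          omega
        · exact h
      ext j
      exact ⟨fun hj => key T1 T2 h1B h2B h j hj, fun hj => key T2 T1 h2B h1B h.symm j hj⟩)]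


set_option maxHeartbeats 2000000 in
/-- **Theorem 5.1(2).**  For `1 ≤ m < n`, `∅ ≠ B ⊆ [n] ∖ [m]`, and
`D = {x : supp(x) is not a down-closed subset of ℍ(m,n) contained in [m] ∪ B}`:
the length is `|D| = 2ⁿ − 2^m − 2^{|B|} + 1`, and for nonzero `u = (v,w)` one has
`2·wt(c_{D,u}) = |D| + 2^m·χ₀ + (−1)^{wt(v)}·(2^{|B|}·χ_B − 1)`; in particular the
weights fall into the six cases listed in Table 2. -/
theorem stmt_5 (n m : ℕ) (hm : 1 ≤ m) (hmn : m < n)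
    (B : Finset (Fin n)) (hBne : B.Nonempty) (hB : ∀ j ∈ B, m ≤ (j : ℕ))
    (D : Finset (Fin n → ZMod 2))
    (hD : D = Finset.univ.filter (fun x =>
      ¬ (HDownClosed n m (supp x) ∧ supp x ⊆ lowSet n m ∪ B))) :
    ((D.card : ℤ) = 2 ^ n - 2 ^ m - 2 ^ B.card + 1)
    ∧ ∀ u : Fin n → ZMod 2, u ≠ 0 →
        (2 * (wtD D u : ℤ) =
          (D.card : ℤ)
            + 2 ^ m * (if ∀ i : Fin n, (i : ℕ) < m → u i = 0 then 1 else 0)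
            + (-1) ^ (wtLow n m u) *
                (2 ^ B.card * (if ∀ j ∈ B, u j = 0 then 1 else 0) - 1))
        ∧ ((∀ i : Fin n, (i : ℕ) < m → u i = 0) →
             ((∀ j ∈ B, u j = 0) → (wtD D u : ℤ) = 2 ^ (n - 1)) ∧
             (¬ (∀ j ∈ B, u j = 0) →
                (wtD D u : ℤ) = 2 ^ (n - 1) - 2 ^ (B.card - 1)))
        ∧ (wtLow n m u % 2 = 1 →
             ((∀ j ∈ B, u j = 0) →
                (wtD D u : ℤ) = 2 ^ (n - 1) + 1 - 2 ^ (m - 1) - 2 ^ B.card) ∧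
             (¬ (∀ j ∈ B, u j = 0) →
                (wtD D u : ℤ) = 2 ^ (n - 1) + 1 - 2 ^ (m - 1) - 2 ^ (B.card - 1)))
        ∧ ((¬ ∀ i : Fin n, (i : ℕ) < m → u i = 0) → wtLow n m u % 2 = 0 →
             ((∀ j ∈ B, u j = 0) →
                (wtD D u : ℤ) = 2 ^ (n - 1) - 2 ^ (m - 1)) ∧
             (¬ (∀ j ∈ B, u j = 0) →
                (wtD D u : ℤ) = 2 ^ (n - 1) - 2 ^ (m - 1) - 2 ^ (B.card - 1))) := by
  classical
  have hn1 : 1 ≤ n := le_of_lt (lt_of_le_of_lt hm hmn)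
  have hBc1 : 1 ≤ B.card := Finset.card_pos.mpr hBne
  have hlowcard : (lowSet n m).card = m := lowSet_card n m (le_of_lt hmn)
  have h2b1 : 1 ≤ 2 ^ B.card := Nat.one_le_two_pow
  -- cardinality of the complement family
  have hGsets : ((univ : Finset (Finset (Fin n))).filter
      (fun S => HDownClosed n m S ∧ S ⊆ lowSet n m ∪ B)).card
        = 2 ^ m + (2 ^ B.card - 1) := by
    have h1 : ((univ : Finset (Finset (Fin n))).filter
        (fun S => HDownClosed n m S ∧ S ⊆ lowSet n m ∪ B))
        = univ.filter (fun S => (HDownClosed n m S ∧ S ⊆ lowSet n m ∪ B) ∧ True) := by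
      simp
    rw [h1, card_P_filter n m B hB (fun _ => True)]
    congr 1
    · have h2 : (lowSet n m).powerset.filter (fun _ => True) = (lowSet n m).powerset := by
        simp
      rw [h2, Finset.card_powerset, hlowcard]
    · have h3 : B.powerset.filter (fun T => T.Nonempty ∧ True) = B.powerset.erase ∅ := by
        ext T
        simp [Finset.nonempty_iff_ne_empty, and_comm]
      rw [h3, Finset.card_erase_of_mem (Finset.empty_mem_powerset B), Finset.card_powerset]
  have hvcard : ((univ : Finset (Fin n → ZMod 2))).card = 2 ^ n := by
    simp [Finset.card_univ, ZMod.card]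
  have hGvec : (univ.filter (fun x : Fin n → ZMod 2 =>
      HDownClosed n m (supp x) ∧ supp x ⊆ lowSet n m ∪ B)).card
        = 2 ^ m + (2 ^ B.card - 1) := by
    rw [card_vec (fun S => HDownClosed n m S ∧ S ⊆ lowSet n m ∪ B)]
    exact hGsets
  have hDcard : D.card = 2 ^ n - (2 ^ m + (2 ^ B.card - 1)) := by
    rw [hD, Finset.filter_not, Finset.card_sdiff_of_subset (Finset.filter_subset _ _), hvcard, hGvec]
  have hGle : 2 ^ m + (2 ^ B.card - 1) ≤ 2 ^ n := by
    rw [← hGvec, ← hvcard]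
    exact Finset.card_filter_le _ _
  have hDZ : (D.card : ℤ) = 2 ^ n - 2 ^ m - 2 ^ B.card + 1 := by
    rw [hDcard]
    rw [Nat.cast_sub hGle, Nat.cast_add, Nat.cast_sub h2b1]
    push_cast
    ring
  -- integer power facts
  have hpn : (2:ℤ) ^ (n-1) * 2 = 2 ^ n := by
    rw [← pow_succ]
    congr 1
    omega
  have hpm : (2:ℤ) ^ (m-1) * 2 = 2 ^ m := by
    rw [← pow_succ]
    congr 1
    omega
  have hpb : (2:ℤ) ^ (B.card-1) * 2 = 2 ^ B.card := by
    rw [← pow_succ]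
    congr 1
    omega
  refine ⟨hDZ, fun u hu => ?_⟩
  -- total count of x with ip u x = 1
  have htot : (univ.filter (fun x : Fin n → ZMod 2 => ip u x = 1)).card = 2 ^ (n-1) := by
    have e0 : (univ.filter (fun x : Fin n → ZMod 2 => ip u x = 1))
        = univ.filter (fun x : Fin n → ZMod 2 => ∑ i ∈ supp x, u i = 1) :=
      Finset.filter_congr (fun x _ => by rw [ip_eq_sum])
    rw [e0, card_vec (fun S => ∑ i ∈ S, u i = 1), ← Finset.powerset_univ, count_sum]
    have hne : ¬ ∀ i ∈ (univ : Finset (Fin n)), u i = 0 := by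
      intro h
      exact hu (funext (fun i => h i (Finset.mem_univ i)))
    rw [if_neg hne, Finset.card_univ, Fintype.card_fin]
  -- decomposition: N + wtD = 2^(n-1)
  have hadd : (univ.filter (fun x : Fin n → ZMod 2 =>
      (HDownClosed n m (supp x) ∧ supp x ⊆ lowSet n m ∪ B) ∧ ip u x = 1)).card
        + wtD D u = 2 ^ (n-1) := by
    rw [wtD, hD, Finset.filter_filter]
    have e1 : univ.filter (fun x : Fin n → ZMod 2 =>
        (HDownClosed n m (supp x) ∧ supp x ⊆ lowSet n m ∪ B) ∧ ip u x = 1)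
        = (univ.filter (fun x : Fin n → ZMod 2 => ip u x = 1)).filter
            (fun x => HDownClosed n m (supp x) ∧ supp x ⊆ lowSet n m ∪ B) := by
      rw [Finset.filter_filter]
      exact Finset.filter_congr (fun x _ => and_comm)
    have e2 : univ.filter (fun x : Fin n → ZMod 2 =>
        (¬ (HDownClosed n m (supp x) ∧ supp x ⊆ lowSet n m ∪ B)) ∧ ip u x = 1)
        = (univ.filter (fun x : Fin n → ZMod 2 => ip u x = 1)).filter
            (fun x => ¬ (HDownClosed n m (supp x) ∧ supp x ⊆ lowSet n m ∪ B)) := by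
      rw [Finset.filter_filter]
      exact Finset.filter_congr (fun x _ => and_comm)
    rw [e1, e2, Finset.card_filter_add_card_filter_not, htot]
  -- splitting N into the two families
  have hN0 : (univ.filter (fun x : Fin n → ZMod 2 =>
      (HDownClosed n m (supp x) ∧ supp x ⊆ lowSet n m ∪ B) ∧ ip u x = 1)).card
      = ((lowSet n m).powerset.filter (fun S => ∑ i ∈ S, u i = 1)).card
        + (B.powerset.filter (fun T => T.Nonempty ∧ ∑ i ∈ lowSet n m ∪ T, u i = 1)).card := by
    have e3 : univ.filter (fun x : Fin n → ZMod 2 =>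
        (HDownClosed n m (supp x) ∧ supp x ⊆ lowSet n m ∪ B) ∧ ip u x = 1)
        = univ.filter (fun x : Fin n → ZMod 2 =>
            (HDownClosed n m (supp x) ∧ supp x ⊆ lowSet n m ∪ B) ∧ ∑ i ∈ supp x, u i = 1) :=
      Finset.filter_congr (fun x _ => by rw [ip_eq_sum])
    rw [e3, card_vec (fun S => (HDownClosed n m S ∧ S ⊆ lowSet n m ∪ B) ∧ ∑ i ∈ S, u i = 1),
      card_P_filter n m B hB (fun S => ∑ i ∈ S, u i = 1)]
  -- the value of the sum over the low set
  have hkfilter : wtLow n m u = ((lowSet n m).filter (fun i => u i ≠ 0)).card := by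
    rw [wtLow, lowSet, Finset.filter_filter]
  have hcsum : (∑ i ∈ lowSet n m, u i) = ((wtLow n m u : ℕ) : ZMod 2) := by
    rw [hkfilter, ← Finset.sum_filter_ne_zero (lowSet n m)]
    rw [Finset.sum_congr rfl (fun i hi => zmod2_eq_one_of_ne_zero (Finset.mem_filter.mp hi).2)]
    rw [Finset.sum_const, nsmul_eq_mul, mul_one]
  have hdisjlow : ∀ T ⊆ B, Disjoint (lowSet n m) T := by
    intro T hT
    rw [Finset.disjoint_left]
    intro i hi hiT
    have h1 := (Finset.mem_filter.mp hi).2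
    have h2 := hB i (hT hiT)
    omega
  have hCset : B.powerset.filter (fun T => T.Nonempty ∧ ∑ i ∈ lowSet n m ∪ T, u i = 1)
      = (B.powerset.filter
          (fun T => ∑ i ∈ T, u i = 1 - ((wtLow n m u : ℕ) : ZMod 2))).erase ∅ := by
    ext T
    simp only [Finset.mem_erase, Finset.mem_filter, Finset.mem_powerset,
      ← Finset.nonempty_iff_ne_empty]
    constructor
    · rintro ⟨hTB, hTne, hsum⟩
      rw [Finset.sum_union (hdisjlow T hTB), hcsum] at hsum
      exact ⟨hTne, hTB, eq_sub_of_add_eq' hsum⟩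
    · rintro ⟨hTne, hTB, hsum⟩
      refine ⟨hTB, hTne, ?_⟩
      rw [Finset.sum_union (hdisjlow T hTB), hcsum, hsum]
      ring
  -- value of the low-part count
  have hNA : ((lowSet n m).powerset.filter (fun S => ∑ i ∈ S, u i = 1)).card
      = if (∀ i : Fin n, (i : ℕ) < m → u i = 0) then 0 else 2 ^ (m-1) := by
    rw [count_sum u (lowSet n m) 1, hlowcard]
    have hiff : (∀ i ∈ lowSet n m, u i = 0) ↔ (∀ i : Fin n, (i : ℕ) < m → u i = 0) := by
      constructor
      · intro h i hi
        exact h i (Finset.mem_filter.mpr ⟨Finset.mem_univ _, hi⟩)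
      · intro h i hi
        exact h i (Finset.mem_filter.mp hi).2
    by_cases h : ∀ i : Fin n, (i : ℕ) < m → u i = 0
    · rw [if_pos (hiff.mpr h), if_pos h, if_neg (by decide : ¬ (1:ZMod 2) = 0)]
    · rw [if_neg (fun hh => h (hiff.mp hh)), if_neg h]
  -- value of the B-part count, according to the parity of wtLow
  have hNC0 : ((wtLow n m u : ℕ) : ZMod 2) = 0 →
      (B.powerset.filter (fun T => T.Nonempty ∧ ∑ i ∈ lowSet n m ∪ T, u i = 1)).card
        = if (∀ j ∈ B, u j = 0) then 0 else 2 ^ (B.card - 1) := by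
    intro hc
    rw [hCset, hc, sub_zero]
    rw [Finset.erase_eq_of_notMem (by
      simp only [Finset.mem_filter]
      rintro ⟨-, h⟩
      rw [Finset.sum_empty] at h
      exact (by decide : (0:ZMod 2) ≠ 1) h)]
    rw [count_sum u B 1]
    by_cases h : ∀ j ∈ B, u j = 0
    · rw [if_pos h, if_pos h, if_neg (by decide : ¬ (1:ZMod 2) = 0)]
    · rw [if_neg h, if_neg h]
  have hNC1 : ((wtLow n m u : ℕ) : ZMod 2) = 1 →
      (B.powerset.filter (fun T => T.Nonempty ∧ ∑ i ∈ lowSet n m ∪ T, u i = 1)).card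
        = (if (∀ j ∈ B, u j = 0) then 2 ^ B.card else 2 ^ (B.card - 1)) - 1 := by
    intro hc
    rw [hCset, hc, sub_self]
    rw [Finset.card_erase_of_mem (Finset.mem_filter.mpr
      ⟨Finset.empty_mem_powerset B, by rw [Finset.sum_empty]⟩)]
    rw [count_sum u B 0]
    by_cases h : ∀ j ∈ B, u j = 0
    · rw [if_pos h, if_pos h, if_pos rfl]
    · rw [if_neg h, if_neg h]
  have hZ : (((lowSet n m).powerset.filter (fun S => ∑ i ∈ S, u i = 1)).card : ℤ)
      + ((B.powerset.filter (fun T => T.Nonempty ∧ ∑ i ∈ lowSet n m ∪ T, u i = 1)).card : ℤ)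
      + (wtD D u : ℤ) = 2 ^ (n-1) := by
    rw [hN0] at hadd
    exact_mod_cast hadd
  have hv0k : (∀ i : Fin n, (i:ℕ) < m → u i = 0) → wtLow n m u = 0 := by
    intro hv0
    rw [wtLow, Finset.card_eq_zero, Finset.filter_eq_empty_iff]
    rintro i - ⟨h1, h2⟩
    exact h2 (hv0 i h1)
  have h2b1' : 1 ≤ 2 ^ (B.card - 1) := Nat.one_le_two_pow
  -- main case analysis
  rcases Nat.even_or_odd (wtLow n m u) with hev | hod
  · -- wtLow even
    have hpar : wtLow n m u % 2 = 0 := Nat.even_iff.mp hev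
    have hc0 : ((wtLow n m u : ℕ) : ZMod 2) = 0 := by
      rw [← ZMod.natCast_mod, hpar, Nat.cast_zero]
    have hneg : ((-1:ℤ)) ^ (wtLow n m u) = 1 := Even.neg_one_pow hev
    rw [hNA, hNC0 hc0] at hZ
    by_cases hwB : ∀ j ∈ B, u j = 0
    · by_cases hv0 : ∀ i : Fin n, (i:ℕ) < m → u i = 0
      · rw [if_pos hv0, if_pos hwB] at hZ
        push_cast at hZ
        refine ⟨?_, ?_, ?_, ?_⟩
        · rw [hDZ, if_pos hv0, if_pos hwB, hneg]
          linarith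
        · exact fun _ => ⟨fun _ => by linarith, fun hbad => absurd hwB hbad⟩
        · intro hodd
          omega
        · exact fun hbad _ => absurd hv0 hbad
      · rw [if_neg hv0, if_pos hwB] at hZ
        push_cast at hZ
        refine ⟨?_, ?_, ?_, ?_⟩
        · rw [hDZ, if_neg hv0, if_pos hwB, hneg]
          linarith
        · exact fun hbad => absurd hbad hv0
        · intro hodd
          omega
        · exact fun _ _ => ⟨fun _ => by linarith, fun hbad => absurd hwB hbad⟩
    · by_cases hv0 : ∀ i : Fin n, (i:ℕ) < m → u i = 0
      · rw [if_pos hv0, if_neg hwB] at hZ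
        push_cast at hZ
        refine ⟨?_, ?_, ?_, ?_⟩
        · rw [hDZ, if_pos hv0, if_neg hwB, hneg]
          linarith
        · exact fun _ => ⟨fun hbad => absurd hbad hwB, fun _ => by linarith⟩
        · intro hodd
          omega
        · exact fun hbad _ => absurd hv0 hbad
      · rw [if_neg hv0, if_neg hwB] at hZ
        push_cast at hZ
        refine ⟨?_, ?_, ?_, ?_⟩
        · rw [hDZ, if_neg hv0, if_neg hwB, hneg]
          linarith
        · exact fun hbad => absurd hbad hv0
        · intro hodd
          omega
        · exact fun _ _ => ⟨fun hbad => absurd hbad hwB, fun _ => by linarith⟩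
  · -- wtLow odd
    have hpar : wtLow n m u % 2 = 1 := Nat.odd_iff.mp hod
    have hc1 : ((wtLow n m u : ℕ) : ZMod 2) = 1 := by
      rw [← ZMod.natCast_mod, hpar, Nat.cast_one]
    have hneg : ((-1:ℤ)) ^ (wtLow n m u) = -1 := Odd.neg_one_pow hod
    have hv0 : ¬ ∀ i : Fin n, (i:ℕ) < m → u i = 0 := by
      intro h
      have := hv0k h
      omega
    rw [hNA, hNC1 hc1, if_neg hv0] at hZ
    by_cases hwB : ∀ j ∈ B, u j = 0
    · rw [if_pos hwB, Nat.cast_sub h2b1] at hZ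
      push_cast at hZ
      refine ⟨?_, ?_, ?_, ?_⟩
      · rw [hDZ, if_neg hv0, if_pos hwB, hneg]
        linarith
      · exact fun hbad => absurd hbad hv0
      · exact fun _ => ⟨fun _ => by linarith, fun hbad => absurd hwB hbad⟩
      · intro _ hbad
        omega
    · rw [if_neg hwB, Nat.cast_sub h2b1'] at hZ
      push_cast at hZ
      refine ⟨?_, ?_, ?_, ?_⟩
      · rw [hDZ, if_neg hv0, if_neg hwB, hneg]
        linarith
      · exact fun hbad => absurd hbad hv0
      · exact fun _ => ⟨fun hbad => absurd hbad hwB, fun _ => by linarith⟩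
      · intro _ hbad
        omega
end

section
/- Let 1 ≤ m ≤ n and let A₁, A₂ ⊆ [m] with A₁ ⊄ A₂ and A₂ ⊄ A₁. Set D = 𝔽₂ⁿ ∖ {x ∈ 𝔽₂ⁿ : supp(x) ⊆ A₁ or supp(x) ⊆ A₂}. Then |D| = 2ⁿ − 2^{|A₁|} − 2^{|A₂|} + 2^{|A₁∩A₂|}, and for every nonzero u ∈ 𝔽₂ⁿ one has 2·wt(c_{D,u}) = 2ⁿ − 2^{|A₁|}(1−χ₁) − 2^{|A₂|}(1−χ₂) + 2^{|A₁∩A₂|}(1−χ₁₂), where χ₁ = 1 iff supp(u) ∩ A₁ = ∅, χ₂ = 1 iff supp(u) ∩ A₂ = ∅, and χ₁₂ = 1 iff supp(u) ∩ (A₁∩A₂) = ∅ (each being 0 otherwise). -/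
open Finset

namespace Stmt6Aux

variable {n : ℕ}

def SA (A : Finset (Fin n)) : Finset (Fin n → ZMod 2) :=
  Finset.univ.filter (fun x => supp x ⊆ A)

lemma mem_SA {A : Finset (Fin n)} {x : Fin n → ZMod 2} :
    x ∈ SA A ↔ ∀ i, x i ≠ 0 → i ∈ A := by
  simp [SA, supp, Finset.subset_iff]

lemma card_SA (A : Finset (Fin n)) : (SA A).card = 2 ^ A.card := by
  classical
  have e : {x : Fin n → ZMod 2 // x ∈ SA A} ≃ (A → ZMod 2) :=
  { toFun := fun x i => x.1 i
    invFun := fun y => ⟨fun i => if h : i ∈ A then y ⟨i, h⟩ else 0, by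
      rw [mem_SA]; intro i hi
      by_contra h
      simp [h] at hi⟩
    left_inv := by
      rintro ⟨x, hx⟩
      ext i
      by_cases h : i ∈ A
      · simp [h]
      · simp only [h, dif_neg, not_false_iff]
        by_contra h0
        exact h (mem_SA.1 hx i (fun h1 => h0 h1.symm))
    right_inv := by
      intro y; ext i; simp [i.2] }
  rw [← Fintype.card_coe]
  rw [Fintype.card_congr e]
  simp [Fintype.card_fun]

lemma SA_add {A : Finset (Fin n)} {x e : Fin n → ZMod 2}
    (hx : x ∈ SA A) (he : e ∈ SA A) : x + e ∈ SA A := by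
  rw [mem_SA] at *
  intro i hi
  by_cases h : x i = 0
  · exact he i (by simpa [h] using hi)
  · exact hx i h

lemma two_mul_card_filter (A : Finset (Fin n)) (u : Fin n → ZMod 2)
    (i₀ : Fin n) (hi₀ : i₀ ∈ A) (hu : u i₀ ≠ 0) :
    2 * ((SA A).filter (fun x => ip u x = 1)).card = 2 ^ A.card := by
  classical
  set e : Fin n → ZMod 2 := fun j => if j = i₀ then 1 else 0 with he
  have heSA : e ∈ SA A := by
    rw [mem_SA]; intro i hi
    by_cases h : i = i₀
    · exact h ▸ hi₀
    · simp [he, h] at hi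
  have hu1 : u i₀ = 1 := by
    have h2 : ∀ a : ZMod 2, a ≠ 0 → a = 1 := by decide
    exact h2 _ hu
  have hip : ∀ x : Fin n → ZMod 2, ip u (x + e) = ip u x + 1 := by
    intro x
    have hs : ∑ i, u i * e i = 1 := by
      have : ∀ i, u i * e i = if i = i₀ then u i else 0 := by
        intro i; by_cases h : i = i₀ <;> simp [he, h]
      rw [Finset.sum_congr rfl (fun i _ => this i), Finset.sum_ite_eq' Finset.univ i₀]
      simp [hu1]
    calc ip u (x + e) = ∑ i, (u i * x i + u i * e i) := by
          simp [ip, Pi.add_apply, mul_add]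
      _ = ip u x + ∑ i, u i * e i := by rw [Finset.sum_add_distrib]; rfl
      _ = ip u x + 1 := by rw [hs]
  have hee : ∀ x : Fin n → ZMod 2, x + e + e = x := by
    intro x; funext j
    show x j + e j + e j = x j
    rw [add_assoc, CharTwo.add_self_eq_zero, add_zero]
  have hbij : ((SA A).filter (fun x => ip u x = 1)).card
      = ((SA A).filter (fun x => ip u x = 0)).card := by
    apply Finset.card_bij' (fun x _ => x + e) (fun x _ => x + e)
    · intro x hx
      simp only [Finset.mem_filter] at hx ⊢
      refine ⟨SA_add hx.1 heSA, ?_⟩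
      rw [hip, hx.2]; decide
    · intro x hx
      simp only [Finset.mem_filter] at hx ⊢
      refine ⟨SA_add hx.1 heSA, ?_⟩
      rw [hip, hx.2]; decide
    · intro x _; exact hee x
    · intro x _; exact hee x
  have hsplit : ((SA A).filter (fun x => ip u x = 1)).card
      + ((SA A).filter (fun x => ip u x = 0)).card = (SA A).card := by
    rw [← Finset.card_filter_add_card_filter_not
      (s := SA A) (p := fun x => ip u x = 1)]
    congr 1
    apply Finset.card_bij (fun x _ => x)
    · intro x hx
      simp only [Finset.mem_filter] at hx ⊢
      have h2 : ∀ a : ZMod 2, a = 0 → ¬ a = 1 := by decide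
      exact ⟨hx.1, h2 _ hx.2⟩
    · intro a b _ _ h; exact h
    · intro b hb
      simp only [Finset.mem_filter] at hb
      have h2 : ∀ a : ZMod 2, ¬ a = 1 → a = 0 := by decide
      exact ⟨b, by simp [Finset.mem_filter, hb.1, h2 _ hb.2]⟩
  rw [← card_SA A, ← hsplit, ← hbij]
  ring

lemma filter_empty_of_disjoint (A : Finset (Fin n)) (u : Fin n → ZMod 2)
    (h : ∀ i ∈ A, u i = 0) :
    (SA A).filter (fun x => ip u x = 1) = ∅ := by
  rw [Finset.filter_eq_empty_iff]
  intro x hx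
  have : ip u x = 0 := by
    apply Finset.sum_eq_zero
    intro i _
    by_cases hxi : x i = 0
    · simp [hxi]
    · rw [h i (mem_SA.1 hx i hxi), zero_mul]
  simp [this]

lemma two_filter_card (A : Finset (Fin n)) (u : Fin n → ZMod 2) :
    (2 : ℤ) * ((SA A).filter (fun x => ip u x = 1)).card
      = 2 ^ A.card * (1 - (if supp u ∩ A = ∅ then 1 else 0)) := by
  classical
  by_cases h : supp u ∩ A = ∅
  · rw [filter_empty_of_disjoint A u]
    · simp [h]
    · intro i hi
      by_contra hui
      have : i ∈ supp u ∩ A := by simp [supp, Finset.mem_inter, hui, hi]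
      simp [h] at this
  · obtain ⟨i₀, hi₀⟩ := Finset.nonempty_iff_ne_empty.2 h
    rw [Finset.mem_inter] at hi₀
    have hui : u i₀ ≠ 0 := by
      have := hi₀.1; simpa [supp] using this
    have := two_mul_card_filter A u i₀ hi₀.2 hui
    simp only [h, if_neg, if_false]
    have h2 : ((2 * ((SA A).filter (fun x => ip u x = 1)).card : ℕ) : ℤ)
        = ((2 ^ A.card : ℕ) : ℤ) := by exact_mod_cast this
    push_cast at h2
    linarith

end Stmt6Aux

open Stmt6Aux in
/-- **Theorem 5.3(1).**  For incomparable `A₁, A₂ ⊆ [m]` and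
`D = 𝔽₂ⁿ ∖ {x : supp(x) ⊆ A₁ or supp(x) ⊆ A₂}`:
`|D| = 2ⁿ − 2^{|A₁|} − 2^{|A₂|} + 2^{|A₁∩A₂|}`, and for nonzero `u`,
`2·wt(c_{D,u}) = 2ⁿ − 2^{|A₁|}(1−χ₁) − 2^{|A₂|}(1−χ₂) + 2^{|A₁∩A₂|}(1−χ₁₂)`. -/
theorem stmt_6 (n m : ℕ) (hm : 1 ≤ m) (hmn : m ≤ n)
    (A₁ A₂ : Finset (Fin n))
    (hA₁ : ∀ i ∈ A₁, (i : ℕ) < m) (hA₂ : ∀ i ∈ A₂, (i : ℕ) < m)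
    (h12 : ¬ A₁ ⊆ A₂) (h21 : ¬ A₂ ⊆ A₁)
    (D : Finset (Fin n → ZMod 2))
    (hD : D = Finset.univ.filter (fun x => ¬ (supp x ⊆ A₁ ∨ supp x ⊆ A₂))) :
    (D.card : ℤ) = 2 ^ n - 2 ^ A₁.card - 2 ^ A₂.card + 2 ^ (A₁ ∩ A₂).card
    ∧ ∀ u : Fin n → ZMod 2, u ≠ 0 →
        2 * (wtD D u : ℤ) =
          2 ^ n
          - 2 ^ A₁.card * (1 - (if supp u ∩ A₁ = ∅ then 1 else 0))
          - 2 ^ A₂.card * (1 - (if supp u ∩ A₂ = ∅ then 1 else 0))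
          + 2 ^ (A₁ ∩ A₂).card * (1 - (if supp u ∩ (A₁ ∩ A₂) = ∅ then 1 else 0)) := by
  classical
  set S₁ := SA A₁ with hS₁
  set S₂ := SA A₂ with hS₂
  set S₁₂ := SA (A₁ ∩ A₂) with hS₁₂
  have hS12 : S₁ ∩ S₂ = S₁₂ := by
    ext x
    simp only [hS₁, hS₂, hS₁₂, SA, Finset.mem_inter, Finset.mem_filter,
      Finset.mem_univ, true_and, Finset.subset_inter_iff]
  have hDeq : D = Finset.univ \ (S₁ ∪ S₂) := by
    rw [hD]
    ext x
    simp only [hS₁, hS₂, SA, Finset.mem_filter, Finset.mem_univ, true_and,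
      Finset.mem_sdiff, Finset.mem_union, not_or]
  have hc1 : S₁.card = 2 ^ A₁.card := card_SA _
  have hc2 : S₂.card = 2 ^ A₂.card := card_SA _
  have hc12 : S₁₂.card = 2 ^ (A₁ ∩ A₂).card := card_SA _
  have hcu : (Finset.univ : Finset (Fin n → ZMod 2)).card = 2 ^ n := by
    simp [Finset.card_univ, ZMod.card]
  have hIE : (S₁ ∪ S₂).card + S₁₂.card = S₁.card + S₂.card := by
    rw [← hS12]; exact Finset.card_union_add_card_inter _ _
  have hDcard : D.card + (S₁ ∪ S₂).card = 2 ^ n := by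
    rw [hDeq, Finset.card_sdiff_add_card_eq_card (Finset.subset_univ _), hcu]
  constructor
  · have h1 : ((D.card : ℤ)) + (S₁ ∪ S₂).card = 2 ^ n := by exact_mod_cast hDcard
    have h2 : (((S₁ ∪ S₂).card : ℤ)) + S₁₂.card = S₁.card + S₂.card := by
      exact_mod_cast hIE
    rw [hc1, hc2, hc12] at h2
    push_cast at h1 h2 ⊢
    linarith
  · intro u hu0
    set P : (Fin n → ZMod 2) → Prop := fun x => ip u x = 1 with hP
    set B := Finset.univ.filter P with hB
    set T₁ := S₁.filter P with hT₁
    set T₂ := S₂.filter P with hT₂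
    set T₁₂ := S₁₂.filter P with hT₁₂
    have hT12 : T₁ ∩ T₂ = T₁₂ := by
      rw [hT₁, hT₂, hT₁₂, ← hS12, Finset.filter_inter_distrib]
    have hsub : T₁ ∪ T₂ ⊆ B := by
      intro x hx
      simp only [hT₁, hT₂, hB, Finset.mem_union, Finset.mem_filter,
        Finset.mem_univ, true_and] at hx ⊢
      tauto
    have hDfil : D.filter P = B \ (T₁ ∪ T₂) := by
      rw [hDeq]
      ext x
      simp only [hT₁, hT₂, hB, Finset.mem_filter, Finset.mem_sdiff,
        Finset.mem_union, Finset.mem_univ, true_and, not_or]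
      tauto
    have hwt : wtD D u + (T₁ ∪ T₂).card = B.card := by
      have hw : wtD D u = (D.filter P).card := rfl
      rw [hw, hDfil, Finset.card_sdiff_add_card_eq_card hsub]
    have hTIE : (T₁ ∪ T₂).card + T₁₂.card = T₁.card + T₂.card := by
      rw [← hT12]; exact Finset.card_union_add_card_inter _ _
    have f1 : (2 : ℤ) * T₁.card
        = 2 ^ A₁.card * (1 - (if supp u ∩ A₁ = ∅ then 1 else 0)) :=
      two_filter_card A₁ u
    have f2 : (2 : ℤ) * T₂.card
        = 2 ^ A₂.card * (1 - (if supp u ∩ A₂ = ∅ then 1 else 0)) :=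
      two_filter_card A₂ u
    have f12 : (2 : ℤ) * T₁₂.card
        = 2 ^ (A₁ ∩ A₂).card * (1 - (if supp u ∩ (A₁ ∩ A₂) = ∅ then 1 else 0)) :=
      two_filter_card (A₁ ∩ A₂) u
    have hSuniv : SA (Finset.univ : Finset (Fin n)) = Finset.univ := by
      ext x; simp [SA]
    have hsuppu : ¬ (supp u ∩ (Finset.univ : Finset (Fin n)) = ∅) := by
      rw [Finset.inter_univ]
      obtain ⟨i, hi⟩ := Function.ne_iff.1 hu0
      intro hemp
      have : i ∈ supp u := by simp [supp]; exact hi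
      simp [hemp] at this
    have fB : (2 : ℤ) * B.card = 2 ^ n := by
      have h := two_filter_card (Finset.univ : Finset (Fin n)) u
      rw [hSuniv, if_neg hsuppu] at h
      rw [Finset.card_fin] at h
      have hBe : B = Finset.univ.filter (fun x => ip u x = 1) := rfl
      rw [hBe]
      simpa using h
    have e1 : (2 : ℤ) * wtD D u + 2 * (T₁ ∪ T₂).card = 2 * B.card := by
      have : ((wtD D u : ℤ)) + (T₁ ∪ T₂).card = B.card := by exact_mod_cast hwt
      linarith
    have e2 : (2 : ℤ) * (T₁ ∪ T₂).card + 2 * T₁₂.card = 2 * T₁.card + 2 * T₂.card := by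
      have : (((T₁ ∪ T₂).card : ℤ)) + T₁₂.card = T₁.card + T₂.card := by exact_mod_cast hTIE
      linarith
    linarith
end

section
/- Let 1 ≤ m < n and let B₁, B₂ ⊆ [n]∖[m] be nonempty with B₁ ⊄ B₂ and B₂ ⊄ B₁. Set D = {x ∈ 𝔽₂ⁿ : supp(x) is not a down-closed subset of ℍ(m,n) contained in [m]∪B₁ or in [m]∪B₂}. Then |D| = 2ⁿ − 2^m − 2^{|B₁|} − 2^{|B₂|} + 2^{|B₁∩B₂|} + 1, and for every nonzero u = (v,w) ∈ 𝔽₂ⁿ one has 2·wt(c_{D,u}) = |D| + 2^m·χ₀ + (−1)^{wt(v)}·(2^{|B₁|}χ₁ + 2^{|B₂|}χ₂ − 2^{|B₁∩B₂|}χ₁₂ − 1), where χ₀ = 1 iff v = 0, χ₁ = 1 iff supp(w) ∩ B₁ = ∅, χ₂ = 1 iff supp(w) ∩ B₂ = ∅, and χ₁₂ = 1 iff supp(w) ∩ (B₁∩B₂) = ∅ (each being 0 otherwise). -/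
open Finset

/-! Write `χ_u(x) = (-1)^(u·x)`. Then `2·wt(c_{D,u}) = |D| - ∑_{x ∈ D} χ_u(x)`, and `|D|` is the
same sum at `u = 0`, so everything reduces to character sums over `D = 𝔽₂ⁿ ∖ F`. A subset of
`ℍ(m,n)` is down-closed iff it lies inside `[m]` or contains `[m]`, so `F` is the union of the
Boolean intervals `[∅, [m]]`, `[[m], [m] ∪ B₁]`, `[[m], [m] ∪ B₂]`, whose intersections are again
intervals. On an interval `[A, A ∪ B]` with `A ∩ B = ∅` the character sum factors over the
coordinates into `(-1)^(∑_{i ∈ A} u i) · 2^|B| · [u = 0 on B]`, and inclusion–exclusion gives the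
formula. -/

def zmodTwoSign (a : ZMod 2) : ℤ := if a = 0 then 1 else -1

lemma zmodTwoSign_add (a b : ZMod 2) : zmodTwoSign (a + b) = zmodTwoSign a * zmodTwoSign b := by
  fin_cases a <;> fin_cases b <;> rfl

lemma zmodTwoSign_sum {ι : Type*} (s : Finset ι) (f : ι → ZMod 2) :
    zmodTwoSign (∑ i ∈ s, f i) = ∏ i ∈ s, zmodTwoSign (f i) := by
  classical
  induction s using Finset.induction_on with
  | empty => rfl
  | insert i s hi ih => rw [sum_insert hi, prod_insert hi, zmodTwoSign_add, ih]

lemma two_mul_card_filter_eq_one {α : Type*} (s : Finset α) (f : α → ZMod 2) :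
    2 * (#(s.filter (f · = 1)) : ℤ) = #s - ∑ x ∈ s, zmodTwoSign (f x) := by
  have h : ∀ a : ZMod 2, 2 * (if a = 1 then 1 else 0 : ℤ) = 1 - zmodTwoSign a := by decide
  rw [card_filter, card_eq_sum_ones, Nat.cast_sum, Nat.cast_sum, mul_sum, ← sum_sub_distrib]
  exact sum_congr rfl fun x _ => by push_cast; exact h (f x)

lemma zmodTwoSign_sum_eq_neg_one_pow {ι : Type*} (s : Finset ι) (f : ι → ZMod 2) :
    zmodTwoSign (∑ i ∈ s, f i) = (-1) ^ #(s.filter (f · ≠ 0)) := by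
  rw [zmodTwoSign_sum]
  simp only [zmodTwoSign, prod_ite, prod_const_one, prod_const, one_mul, ne_eq]

lemma prod_one_add_zmodTwoSign {ι : Type*} (s : Finset ι) (f : ι → ZMod 2) :
    ∏ i ∈ s, (1 + zmodTwoSign (f i)) = 2 ^ #s * if ∀ i ∈ s, f i = 0 then 1 else 0 := by
  have h : ∀ a : ZMod 2, 1 + zmodTwoSign a = if a = 0 then 2 else 0 := by decide
  simp_rw [h, prod_ite_zero, prod_const]
  split_ifs <;> simp

section SuppInterval

variable {n : ℕ}

def suppInterval (A B : Finset (Fin n)) : Finset (Fin n → ZMod 2) :=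
  univ.filter fun x => A ⊆ supp x ∧ supp x ⊆ A ∪ B

lemma suppInterval_inter_suppInterval (A B B' : Finset (Fin n)) :
    suppInterval A B ∩ suppInterval A B' = suppInterval A (B ∩ B') := by
  ext x
  simp only [suppInterval, mem_inter, mem_filter, mem_univ, true_and, union_inter_distrib_left,
    subset_inter_iff]
  tauto

lemma suppInterval_empty_inter_suppInterval (A B : Finset (Fin n)) :
    suppInterval ∅ A ∩ suppInterval A B = suppInterval A ∅ := by
  ext x
  simp only [suppInterval, mem_inter, mem_filter, mem_univ, true_and, empty_subset, empty_union,
    union_empty]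
  constructor
  · rintro ⟨hxA, hAx, -⟩
    exact ⟨hAx, hxA⟩
  · rintro ⟨hAx, hxA⟩
    exact ⟨hxA, hAx, hxA.trans subset_union_left⟩

lemma sum_suppInterval_union {M : Type*} [AddCommGroup M] (f : (Fin n → ZMod 2) → M)
    (A B₁ B₂ : Finset (Fin n)) :
    ∑ x ∈ suppInterval ∅ A ∪ (suppInterval A B₁ ∪ suppInterval A B₂), f x =
      ∑ x ∈ suppInterval ∅ A, f x + ∑ x ∈ suppInterval A B₁, f x + ∑ x ∈ suppInterval A B₂, f x
        - ∑ x ∈ suppInterval A (B₁ ∩ B₂), f x - ∑ x ∈ suppInterval A ∅, f x := by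
  have h₁₂ := sum_union_inter (s₁ := suppInterval A B₁) (s₂ := suppInterval A B₂) (f := f)
  have h := sum_union_inter (s₁ := suppInterval ∅ A)
    (s₂ := suppInterval A B₁ ∪ suppInterval A B₂) (f := f)
  rw [inter_union_distrib_left, suppInterval_empty_inter_suppInterval,
    suppInterval_empty_inter_suppInterval, union_self] at h
  rw [suppInterval_inter_suppInterval] at h₁₂
  rw [eq_sub_iff_add_eq, eq_sub_iff_add_eq, h, add_assoc, h₁₂, add_assoc]

lemma suppInterval_eq_piFinset (A B : Finset (Fin n)) :
    suppInterval A B =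
      Fintype.piFinset fun i => if i ∈ A then {1} else if i ∈ B then univ else {0} := by
  have h : ∀ a : ZMod 2, a ≠ 0 ↔ a = 1 := by decide
  ext x
  simp only [suppInterval, supp, mem_filter, mem_univ, true_and, Fintype.mem_piFinset,
    subset_iff, mem_union]
  constructor
  · rintro ⟨hA, hAB⟩ i
    split_ifs with hiA hiB
    · exact mem_singleton.mpr ((h _).mp (hA hiA))
    · exact mem_univ _
    · exact mem_singleton.mpr (not_not.mp fun hx => (hAB hx).elim hiA hiB)
  · intro hx
    refine ⟨fun i hiA => ?_, fun i hxi => ?_⟩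
    · simpa [hiA, h] using hx i
    · by_contra! hi
      have hxi0 := hx i
      rw [if_neg hi.1, if_neg hi.2, mem_singleton] at hxi0
      exact hxi hxi0

lemma sum_zmodTwoSign_ip_suppInterval {A B : Finset (Fin n)} (hAB : Disjoint A B)
    (u : Fin n → ZMod 2) :
    ∑ x ∈ suppInterval A B, zmodTwoSign (ip u x) =
      zmodTwoSign (∑ i ∈ A, u i) * (2 ^ #B * if ∀ j ∈ B, u j = 0 then 1 else 0) := by
  have hfactor : ∀ i, ∑ a ∈ (if i ∈ A then {1} else if i ∈ B then univ else {0}),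
      zmodTwoSign (u i * a) =
        if i ∈ A then zmodTwoSign (u i) else if i ∈ B then 1 + zmodTwoSign (u i) else 1 := by
    intro i
    split_ifs
    · simp
    · exact (by decide : ∀ a : ZMod 2, ∑ b, zmodTwoSign (a * b) = 1 + zmodTwoSign a) (u i)
    · simp [zmodTwoSign]
  simp only [suppInterval_eq_piFinset, ip, zmodTwoSign_sum]
  rw [← prod_univ_sum _ fun i a => zmodTwoSign (u i * a)]
  simp only [hfactor]
  have hA : univ.filter (· ∈ A) = A := by ext; simp
  have hB : univ.filter (· ∉ A) ∩ B = B :=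
    inter_eq_right.mpr fun i hiB => by simpa using disjoint_right.mp hAB hiB
  rw [prod_ite, prod_ite_mem, hA, hB, prod_one_add_zmodTwoSign]
  -- the two sides differ only in the `Decidable` instance of the `if`
  congr

lemma card_eq_sum_zmodTwoSign_ip_zero (s : Finset (Fin n → ZMod 2)) :
    (#s : ℤ) = ∑ x ∈ s, zmodTwoSign (ip 0 x) := by
  simp [ip, zmodTwoSign]

lemma suppInterval_empty_univ : suppInterval ∅ (univ : Finset (Fin n)) = univ := by
  ext x; simp [suppInterval]

lemma sum_zmodTwoSign_ip_univ (u : Fin n → ZMod 2) :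
    ∑ x, zmodTwoSign (ip u x) = if u = 0 then 2 ^ n else 0 := by
  rw [← suppInterval_empty_univ, sum_zmodTwoSign_ip_suppInterval (disjoint_empty_left _)]
  simp [funext_iff, zmodTwoSign]

end SuppInterval

lemma hDownClosed_iff {n m : ℕ} (S : Finset (Fin n)) :
    HDownClosed n m S ↔ S ⊆ lowSet n m ∨ lowSet n m ⊆ S := by
  simp only [HDownClosed, Hle, lowSet, subset_iff, mem_filter, mem_univ, true_and]
  constructor
  · intro h
    by_contra! ⟨⟨j, hjS, hjm⟩, i, him, hiS⟩
    exact hiS (h i j (Or.inr ⟨him, hjm⟩) hjS)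
  · rintro (h | h) i j (rfl | ⟨him, hjm⟩) hjS
    · exact hjS
    · exact absurd (h hjS) (not_lt.mpr hjm)
    · exact hjS
    · exact h him

lemma card_lowSet {n m : ℕ} (h : m ≤ n) : #(lowSet n m) = m := by
  rw [lowSet, Fin.card_filter_val_lt, min_eq_right h]

lemma disjoint_lowSet {n m : ℕ} {B : Finset (Fin n)} (hB : ∀ j ∈ B, m ≤ (j : ℕ)) :
    Disjoint (lowSet n m) B :=
  disjoint_left.mpr fun i hi hiB => by
    simp only [lowSet, mem_filter, mem_univ, true_and] at hi
    exact absurd (hB i hiB) (not_le.mpr hi)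

lemma zmodTwoSign_sum_lowSet {n m : ℕ} (u : Fin n → ZMod 2) :
    zmodTwoSign (∑ i ∈ lowSet n m, u i) = (-1) ^ wtLow n m u := by
  rw [zmodTwoSign_sum_eq_neg_one_pow, lowSet, filter_filter, wtLow]

lemma filter_hDownClosed_eq {n m : ℕ} (B₁ B₂ : Finset (Fin n)) :
    univ.filter (fun x : Fin n → ZMod 2 => HDownClosed n m (supp x) ∧
        (supp x ⊆ lowSet n m ∪ B₁ ∨ supp x ⊆ lowSet n m ∪ B₂)) =
      suppInterval ∅ (lowSet n m) ∪
        (suppInterval (lowSet n m) B₁ ∪ suppInterval (lowSet n m) B₂) := by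
  ext x
  have h₁ : lowSet n m ⊆ lowSet n m ∪ B₁ := subset_union_left
  have h₂ : lowSet n m ⊆ lowSet n m ∪ B₂ := subset_union_left
  simp only [suppInterval, mem_union, mem_filter, mem_univ, true_and, hDownClosed_iff,
    empty_subset, empty_union]
  constructor
  · rintro ⟨hL | hL, hB⟩ <;> tauto
  · rintro (hL | hL | hL)
    · exact ⟨Or.inl hL, Or.inl (hL.trans h₁)⟩
    · exact ⟨Or.inr hL.1, Or.inl hL.2⟩
    · exact ⟨Or.inr hL.1, Or.inr hL.2⟩

lemma sum_zmodTwoSign_ip_union_suppInterval_lowSet {n m : ℕ} (hmn : m ≤ n) {B₁ B₂ : Finset (Fin n)}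
    (hB₁ : ∀ j ∈ B₁, m ≤ (j : ℕ)) (hB₂ : ∀ j ∈ B₂, m ≤ (j : ℕ)) (u : Fin n → ZMod 2) :
    ∑ x ∈ suppInterval ∅ (lowSet n m) ∪
        (suppInterval (lowSet n m) B₁ ∪ suppInterval (lowSet n m) B₂), zmodTwoSign (ip u x) =
      2 ^ m * (if ∀ i : Fin n, (i : ℕ) < m → u i = 0 then 1 else 0)
        + (-1) ^ (wtLow n m u) *
            (2 ^ B₁.card * (if ∀ j ∈ B₁, u j = 0 then 1 else 0)
             + 2 ^ B₂.card * (if ∀ j ∈ B₂, u j = 0 then 1 else 0)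
             - 2 ^ (B₁ ∩ B₂).card * (if ∀ j ∈ B₁ ∩ B₂, u j = 0 then 1 else 0)
             - 1) := by
  rw [sum_suppInterval_union,
    sum_zmodTwoSign_ip_suppInterval (disjoint_empty_left _),
    sum_zmodTwoSign_ip_suppInterval (disjoint_lowSet hB₁),
    sum_zmodTwoSign_ip_suppInterval (disjoint_lowSet hB₂),
    sum_zmodTwoSign_ip_suppInterval (disjoint_lowSet fun j hj => hB₁ j (mem_inter.mp hj).1),
    sum_zmodTwoSign_ip_suppInterval (disjoint_empty_right _), zmodTwoSign_sum_lowSet,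
    card_lowSet hmn]
  simp only [sum_empty, zmodTwoSign, if_true, one_mul, card_empty, pow_zero, notMem_empty,
    IsEmpty.forall_iff, implies_true, mul_one, lowSet, mem_filter, mem_univ, true_and]
  ring

theorem stmt_7_general (n m : ℕ) (hmn : m < n)
    (B₁ B₂ : Finset (Fin n))
    (hB₁ : ∀ j ∈ B₁, m ≤ (j : ℕ)) (hB₂ : ∀ j ∈ B₂, m ≤ (j : ℕ))
    (D : Finset (Fin n → ZMod 2))
    (hD : D = Finset.univ.filter (fun x =>
      ¬ (HDownClosed n m (supp x) ∧
          (supp x ⊆ lowSet n m ∪ B₁ ∨ supp x ⊆ lowSet n m ∪ B₂)))) :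
    (D.card : ℤ) = 2 ^ n - 2 ^ m - 2 ^ B₁.card - 2 ^ B₂.card + 2 ^ (B₁ ∩ B₂).card + 1
    ∧ ∀ u : Fin n → ZMod 2, u ≠ 0 →
        2 * (wtD D u : ℤ) =
          (D.card : ℤ)
          + 2 ^ m * (if ∀ i : Fin n, (i : ℕ) < m → u i = 0 then 1 else 0)
          + (-1) ^ (wtLow n m u) *
              (2 ^ B₁.card * (if ∀ j ∈ B₁, u j = 0 then 1 else 0)
               + 2 ^ B₂.card * (if ∀ j ∈ B₂, u j = 0 then 1 else 0)
               - 2 ^ (B₁ ∩ B₂).card * (if ∀ j ∈ B₁ ∩ B₂, u j = 0 then 1 else 0)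
               - 1) := by
  have hsum : ∀ u, ∑ x ∈ D, zmodTwoSign (ip u x) = ∑ x, zmodTwoSign (ip u x) -
      ∑ x ∈ suppInterval ∅ (lowSet n m) ∪
        (suppInterval (lowSet n m) B₁ ∪ suppInterval (lowSet n m) B₂), zmodTwoSign (ip u x) := by
    intro u
    rw [hD, filter_not, filter_hDownClosed_eq, sum_sdiff_eq_sub (subset_univ _)]
  refine ⟨?_, fun u hu => ?_⟩
  · rw [card_eq_sum_zmodTwoSign_ip_zero, hsum, sum_zmodTwoSign_ip_univ,
      sum_zmodTwoSign_ip_union_suppInterval_lowSet hmn.le hB₁ hB₂]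
    simp only [↓reduceIte, Pi.zero_apply, implies_true, mul_one, wtLow, ne_eq, not_true_eq_false,
      and_false, filter_false, card_empty, pow_zero, mem_inter, one_mul]
    ring
  · rw [wtD, two_mul_card_filter_eq_one, hsum, sum_zmodTwoSign_ip_univ,
      sum_zmodTwoSign_ip_union_suppInterval_lowSet hmn.le hB₁ hB₂, if_neg hu]
    ring

/-- **Theorem 5.3(2).**  For `1 ≤ m < n`, nonempty incomparable
`B₁, B₂ ⊆ [n] ∖ [m]`, and `D = {x : supp(x) is not a down-closed subset of
ℍ(m,n) contained in [m]∪B₁ or in [m]∪B₂}`: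
`|D| = 2ⁿ − 2^m − 2^{|B₁|} − 2^{|B₂|} + 2^{|B₁∩B₂|} + 1`, and for nonzero
`u = (v,w)` one has
`2·wt(c_{D,u}) = |D| + 2^m·χ₀ + (−1)^{wt(v)}·(2^{|B₁|}χ₁ + 2^{|B₂|}χ₂ − 2^{|B₁∩B₂|}χ₁₂ − 1)`. -/
theorem stmt_7 (n m : ℕ) (hm : 1 ≤ m) (hmn : m < n)
    (B₁ B₂ : Finset (Fin n))
    (hB₁ne : B₁.Nonempty) (hB₂ne : B₂.Nonempty)
    (hB₁ : ∀ j ∈ B₁, m ≤ (j : ℕ)) (hB₂ : ∀ j ∈ B₂, m ≤ (j : ℕ))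
    (h12 : ¬ B₁ ⊆ B₂) (h21 : ¬ B₂ ⊆ B₁)
    (D : Finset (Fin n → ZMod 2))
    (hD : D = Finset.univ.filter (fun x =>
      ¬ (HDownClosed n m (supp x) ∧
          (supp x ⊆ lowSet n m ∪ B₁ ∨ supp x ⊆ lowSet n m ∪ B₂)))) :
    (D.card : ℤ) = 2 ^ n - 2 ^ m - 2 ^ B₁.card - 2 ^ B₂.card + 2 ^ (B₁ ∩ B₂).card + 1
    ∧ ∀ u : Fin n → ZMod 2, u ≠ 0 →
        2 * (wtD D u : ℤ) =
          (D.card : ℤ)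
          + 2 ^ m * (if ∀ i : Fin n, (i : ℕ) < m → u i = 0 then 1 else 0)
          + (-1) ^ (wtLow n m u) *
              (2 ^ B₁.card * (if ∀ j ∈ B₁, u j = 0 then 1 else 0)
               + 2 ^ B₂.card * (if ∀ j ∈ B₂, u j = 0 then 1 else 0)
               - 2 ^ (B₁ ∩ B₂).card * (if ∀ j ∈ B₁ ∩ B₂, u j = 0 then 1 else 0)
               - 1) :=
  stmt_7_general n m hmn B₁ B₂ hB₁ hB₂ D hD
end

section
/- Let 1 ≤ m < n and let B₁, B₂ ⊆ [n]∖[m] be nonempty with B₁ ⊄ B₂ and B₂ ⊄ B₁. Let f : 𝔽₂ⁿ → 𝔽₂ be defined by f(x) = 1 if and only if supp(x) is a nonempty down-closed subset of ℍ(m,n) contained in [m]∪B₁ or in [m]∪B₂. Then: wt(c_f(0,0)) = 0; wt(c_f(0,u)) = 2^{n−1} for all u ≠ 0; wt(c_f(1,0)) = 2^m − 2 + 2^{|B₁|} + 2^{|B₂|} − 2^{|B₁∩B₂|}; and for every nonzero u = (v,w) ∈ 𝔽₂ⁿ, wt(c_f(1,u)) = 2^{n−1} − 1 + 2^m·χ₀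 + (−1)^{wt(v)}·(2^{|B₁|}χ₁ + 2^{|B₂|}χ₂ − 2^{|B₁∩B₂|}χ₁₂ − 1), where χ₀ = 1 iff v = 0, χ₁ = 1 iff supp(w) ∩ B₁ = ∅, χ₂ = 1 iff supp(w) ∩ B₂ = ∅, and χ₁₂ = 1 iff supp(w) ∩ (B₁∩B₂) = ∅ (each being 0 otherwise). -/
open Finset

/-!
For `u ≠ 0` exactly half of all `x` have `u·x = 1`, and splitting on the value of `f` gives
`wt(c_f(1,u)) = wt(c_f(0,u)) + ∑_{f(x)=1} (-1)^{u·x}`. Under `x ↦ supp x` the sign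
`(-1)^{u·x}` becomes the character `A ↦ (-1)^{|U ∩ A|}`, whose sum over a Boolean interval
`[L, L ∪ B]` (with `L ∩ B = ∅`) is `(-1)^{|U ∩ L|} 2^{|B|}` if `U ∩ B = ∅` and `0` otherwise.
A down-closed set of `ℍ(m,n)` either lies inside `[m]` or contains it, so the supports of the
`x` with `f(x) = 1` form `2^{[m]} ∪ [[m], [m] ∪ B₁] ∪ [[m], [m] ∪ B₂]` minus `∅`. The powerset meets
the two intervals only in `[m]`, and the intervals meet in `[[m], [m] ∪ (B₁ ∩ B₂)]`, so
inclusion–exclusion gives the formula.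
-/

namespace HierarchicalCode

section Walsh

variable {α : Type*} [DecidableEq α]

def walsh (U A : Finset α) : ℤ := (-1) ^ #(U ∩ A)

lemma walsh_eq_prod (U A : Finset α) : walsh U A = ∏ i ∈ A, if i ∈ U then -1 else 1 := by
  rw [prod_ite, prod_const_one, mul_one, prod_const, walsh, filter_mem_eq_inter, inter_comm]

lemma walsh_union (U : Finset α) {A B : Finset α} (h : Disjoint A B) :
    walsh U (A ∪ B) = walsh U A * walsh U B := by
  rw [walsh, inter_union_distrib_left,
    card_union_of_disjoint (h.mono inter_subset_right inter_subset_right), pow_add]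
  rfl

lemma sum_powerset_walsh (U S : Finset α) :
    ∑ A ∈ S.powerset, walsh U A = if Disjoint U S then 2 ^ #S else 0 := by
  simp_rw [walsh_eq_prod, ← prod_one_add]
  split_ifs with h
  · rw [prod_congr rfl fun i hi => by rw [if_neg (disjoint_right.1 h hi)], prod_const]
    norm_num
  · obtain ⟨i, hiU, hiS⟩ := not_disjoint_iff.1 h
    exact prod_eq_zero hiS (by simp [hiU])

lemma sum_Icc_walsh (U : Finset α) {L B : Finset α} (h : Disjoint L B) :
    ∑ A ∈ Icc L (L ∪ B), walsh U A = walsh U L * if Disjoint U B then 2 ^ #B else 0 := by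
  rw [Icc_eq_image_powerset subset_union_left, union_sdiff_cancel_left h, sum_image,
    ← sum_powerset_walsh, mul_sum]
  · exact sum_congr rfl fun T hT => walsh_union U (h.mono_right (mem_powerset.1 hT))
  · intro T₁ h₁ T₂ h₂ hT
    rw [← union_sdiff_cancel_left (h.mono_right (mem_powerset.1 h₁)),
      ← union_sdiff_cancel_left (h.mono_right (mem_powerset.1 h₂))]
    exact congrArg (· \ L) hT

def hierFamily (L B₁ B₂ : Finset α) : Finset (Finset α) :=
  (L.powerset ∪ (Icc L (L ∪ B₁) ∪ Icc L (L ∪ B₂))).erase ∅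

lemma sum_walsh_hierFamily (U : Finset α) {L B₁ B₂ : Finset α} (h₁ : Disjoint L B₁)
    (h₂ : Disjoint L B₂) :
    ∑ A ∈ hierFamily L B₁ B₂, walsh U A
      = (if Disjoint U L then 2 ^ #L else 0) - 1
        + walsh U L * ((if Disjoint U B₁ then 2 ^ #B₁ else 0)
          + (if Disjoint U B₂ then 2 ^ #B₂ else 0)
          - (if Disjoint U (B₁ ∩ B₂) then 2 ^ #(B₁ ∩ B₂) else 0) - 1) := by
  have hIcc : Icc L (L ∪ B₁) ∩ Icc L (L ∪ B₂) = Icc L (L ∪ (B₁ ∩ B₂)) := by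
    ext A
    simp only [mem_inter, mem_Icc, union_inter_distrib_left, subset_inter_iff]
    tauto
  have hL : L.powerset ∩ (Icc L (L ∪ B₁) ∪ Icc L (L ∪ B₂)) = {L} := by
    ext A
    simp only [mem_inter, mem_powerset, mem_union, mem_Icc, mem_singleton]
    constructor
    · rintro ⟨hAL, ⟨hLA, -⟩ | ⟨hLA, -⟩⟩ <;> exact subset_antisymm hAL hLA
    · rintro rfl
      exact ⟨subset_rfl, .inl ⟨le_rfl, subset_union_left⟩⟩
  have hU₀ := sum_union_inter (s₁ := L.powerset) (s₂ := Icc L (L ∪ B₁) ∪ Icc L (L ∪ B₂))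
    (f := walsh U)
  have hU₁ := sum_union_inter (s₁ := Icc L (L ∪ B₁)) (s₂ := Icc L (L ∪ B₂)) (f := walsh U)
  rw [hL, sum_singleton, sum_powerset_walsh] at hU₀
  rw [hIcc, sum_Icc_walsh U h₁, sum_Icc_walsh U h₂,
    sum_Icc_walsh U (h₁.mono_right inter_subset_left)] at hU₁
  rw [hierFamily, sum_erase_eq_sub (mem_union_left _ (empty_mem_powerset L)),
    show walsh U ∅ = 1 by simp [walsh]]
  linear_combination hU₀ + hU₁

lemma mem_hierFamily {L B₁ B₂ A : Finset α} :
    A ∈ hierFamily L B₁ B₂ ↔ A.Nonempty ∧ (A ⊆ L ∨ L ⊆ A) ∧ (A ⊆ L ∪ B₁ ∨ A ⊆ L ∪ B₂) := by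
  simp only [hierFamily, mem_erase, mem_union, mem_powerset, mem_Icc, nonempty_iff_ne_empty]
  have : A ⊆ L → A ⊆ L ∪ B₁ := fun h => h.trans subset_union_left
  tauto

end Walsh

section Vectors

variable {n : ℕ}

def suppEquiv : (Fin n → ZMod 2) ≃ Finset (Fin n) where
  toFun := supp
  invFun A i := if i ∈ A then 1 else 0
  left_inv x := by
    funext i
    simp only [supp, mem_filter, mem_univ, true_and]
    generalize x i = a
    revert a
    decide
  right_inv A := by
    ext i
    by_cases h : i ∈ A <;> simp [supp, h]

lemma supp_eq_empty {x : Fin n → ZMod 2} : supp x = ∅ ↔ x = 0 := by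
  rw [← suppEquiv.injective.eq_iff]
  simp [suppEquiv, supp]

lemma ip_eq_card (u x : Fin n → ZMod 2) : ip u x = #(supp u ∩ supp x) := by
  have hmul : ∀ a b : ZMod 2, a * b = if a ≠ 0 ∧ b ≠ 0 then 1 else 0 := by decide
  rw [ip, sum_congr rfl fun i _ => hmul (u i) (x i), sum_boole, supp, supp, ← filter_and]

lemma neg_one_pow_ip (u x : Fin n → ZMod 2) :
    (-1 : ℤ) ^ (ip u x).val = walsh (supp u) (supp x) := by
  rw [ip_eq_card, ZMod.val_natCast, ← neg_one_pow_eq_pow_mod_two]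
  rfl

lemma sum_neg_one_pow_ip_of_ne_zero {u : Fin n → ZMod 2} (hu : u ≠ 0) :
    ∑ x, (-1 : ℤ) ^ (ip u x).val = 0 := by
  simp_rw [neg_one_pow_ip]
  rw [show ∑ x, walsh (supp u) (supp x) = ∑ A, walsh (supp u) A from suppEquiv.sum_comp _,
    ← powerset_univ, sum_powerset_walsh,
    if_neg (by rwa [← top_eq_univ, disjoint_top, bot_eq_empty, supp_eq_empty])]

lemma wtF_zero_zero (f : (Fin n → ZMod 2) → ZMod 2) : wtF f 0 0 = 0 := by
  simp [wtF, ip]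

lemma wtF_zero_of_ne_zero (f : (Fin n → ZMod 2) → ZMod 2) {u : Fin n → ZMod 2} (hu : u ≠ 0) :
    wtF f 0 u = 2 ^ (n - 1) := by
  have hpt : ∀ x, (2 : ℤ) * (if x ≠ 0 ∧ 0 * f x + ip u x = 1 then 1 else 0)
      = 1 - (-1) ^ (ip u x).val := by
    intro x
    rcases eq_or_ne x 0 with rfl | hx
    · simp [ip]
    · simp only [ne_eq, hx, not_false_eq_true, true_and, zero_mul, zero_add]
      generalize ip u x = a
      revert a
      decide
  have h2 : (2 : ℤ) * wtF f 0 u = 2 ^ n := by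
    rw [wtF, card_filter, Nat.cast_sum, mul_sum]
    push_cast
    rw [sum_congr rfl fun x _ => hpt x, sum_sub_distrib, sum_neg_one_pow_ip_of_ne_zero hu]
    simp
  obtain ⟨i, -⟩ := Function.ne_iff.1 hu
  have hn : (2 : ℤ) ^ n = 2 * 2 ^ (n - 1) := by rw [← pow_succ', Nat.sub_add_cancel i.pos]
  exact_mod_cast (by linarith : (wtF f 0 u : ℤ) = 2 ^ (n - 1))

lemma wtF_one {f : (Fin n → ZMod 2) → ZMod 2} (hf0 : f 0 ≠ 1) (u : Fin n → ZMod 2) :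
    (wtF f 1 u : ℤ) = wtF f 0 u + ∑ x with f x = 1, (-1) ^ (ip u x).val := by
  have hpt : ∀ x, (if x ≠ 0 ∧ 1 * f x + ip u x = 1 then 1 else 0 : ℤ)
      = (if x ≠ 0 ∧ 0 * f x + ip u x = 1 then 1 else 0)
        + if f x = 1 then (-1) ^ (ip u x).val else 0 := by
    intro x
    rcases eq_or_ne x 0 with rfl | hx
    · simp [hf0]
    · simp only [ne_eq, hx, not_false_eq_true, true_and]
      generalize f x = a, ip u x = b
      revert a b
      decide
  simp only [wtF, card_filter, Nat.cast_sum, sum_filter, ← sum_add_distrib]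
  push_cast
  exact sum_congr rfl fun x _ => hpt x

end Vectors

section Hierarchical

variable {n m : ℕ}

lemma mem_lowSet {i : Fin n} : i ∈ lowSet n m ↔ (i : ℕ) < m := by
  simp [lowSet]

lemma card_lowSet (h : m ≤ n) : #(lowSet n m) = m := by
  rw [lowSet, Fin.card_filter_val_lt, min_eq_right h]

lemma disjoint_lowSet {B : Finset (Fin n)} (hB : ∀ j ∈ B, m ≤ (j : ℕ)) :
    Disjoint (lowSet n m) B :=
  disjoint_left.2 fun i hi hiB => (hB i hiB).not_gt (mem_lowSet.1 hi)

lemma hDownClosed_iff {A : Finset (Fin n)} :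
    HDownClosed n m A ↔ A ⊆ lowSet n m ∨ lowSet n m ⊆ A := by
  constructor
  · intro h
    by_contra! hA
    obtain ⟨j, hjA, hj⟩ := not_subset.1 hA.1
    exact hA.2 fun i hi => h i j (.inr ⟨mem_lowSet.1 hi, not_lt.1 (mem_lowSet.not.1 hj)⟩) hjA
  · rintro (h | h) i j (rfl | ⟨hi, hj⟩) hjA
    · exact hjA
    · exact absurd (mem_lowSet.1 (h hjA)) hj.not_gt
    · exact hjA
    · exact h (mem_lowSet.2 hi)

lemma wtLow_zero : wtLow n m 0 = 0 := by
  simp [wtLow]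

lemma disjoint_supp_iff {u : Fin n → ZMod 2} {B : Finset (Fin n)} :
    Disjoint (supp u) B ↔ ∀ j ∈ B, u j = 0 := by
  simp [disjoint_right, supp]

lemma walsh_supp_lowSet (u : Fin n → ZMod 2) :
    walsh (supp u) (lowSet n m) = (-1) ^ wtLow n m u := by
  rw [walsh, wtLow, supp, lowSet, ← filter_and]
  simp_rw [and_comm]

lemma sum_neg_one_pow_ip_of_hierarchical (hmn : m ≤ n) {B₁ B₂ : Finset (Fin n)}
    (hB₁ : ∀ j ∈ B₁, m ≤ (j : ℕ)) (hB₂ : ∀ j ∈ B₂, m ≤ (j : ℕ))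
    {f : (Fin n → ZMod 2) → ZMod 2}
    (hf : ∀ x, f x = 1 ↔
      ((supp x).Nonempty ∧ HDownClosed n m (supp x) ∧
        (supp x ⊆ lowSet n m ∪ B₁ ∨ supp x ⊆ lowSet n m ∪ B₂)))
    (u : Fin n → ZMod 2) :
    ∑ x with f x = 1, (-1 : ℤ) ^ (ip u x).val
      = 2 ^ m * (if ∀ i : Fin n, (i : ℕ) < m → u i = 0 then 1 else 0) - 1
        + (-1) ^ wtLow n m u *
          (2 ^ #B₁ * (if ∀ j ∈ B₁, u j = 0 then 1 else 0)
            + 2 ^ #B₂ * (if ∀ j ∈ B₂, u j = 0 then 1 else 0)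
            - 2 ^ #(B₁ ∩ B₂) * (if ∀ j ∈ B₁ ∩ B₂, u j = 0 then 1 else 0) - 1) := by
  rw [sum_equiv suppEquiv (t := hierFamily (lowSet n m) B₁ B₂) (g := walsh (supp u))
      (fun x => by rw [mem_filter, hf, hDownClosed_iff, mem_hierFamily]; simp [suppEquiv])
      (fun x _ => neg_one_pow_ip u x),
    sum_walsh_hierFamily (supp u) (disjoint_lowSet hB₁) (disjoint_lowSet hB₂),
    card_lowSet hmn, walsh_supp_lowSet]
  simp only [disjoint_supp_iff, mem_lowSet, mul_ite, mul_one, mul_zero]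

end Hierarchical

end HierarchicalCode

open HierarchicalCode in
theorem stmt_11_general (n m : ℕ) (hmn : m < n)
    (B₁ B₂ : Finset (Fin n))
    (hB₁ : ∀ j ∈ B₁, m ≤ (j : ℕ)) (hB₂ : ∀ j ∈ B₂, m ≤ (j : ℕ))
    (f : (Fin n → ZMod 2) → ZMod 2)
    (hf : ∀ x, f x = 1 ↔
      ((supp x).Nonempty ∧ HDownClosed n m (supp x) ∧
        (supp x ⊆ lowSet n m ∪ B₁ ∨ supp x ⊆ lowSet n m ∪ B₂))) :
    wtF f 0 0 = 0
    ∧ (∀ u : Fin n → ZMod 2, u ≠ 0 → wtF f 0 u = 2 ^ (n - 1))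
    ∧ (wtF f 1 0 : ℤ) = 2 ^ m - 2 + 2 ^ B₁.card + 2 ^ B₂.card - 2 ^ (B₁ ∩ B₂).card
    ∧ ∀ u : Fin n → ZMod 2, u ≠ 0 →
        (wtF f 1 u : ℤ) =
          2 ^ (n - 1) - 1
          + 2 ^ m * (if ∀ i : Fin n, (i : ℕ) < m → u i = 0 then 1 else 0)
          + (-1) ^ (wtLow n m u) *
              (2 ^ B₁.card * (if ∀ j ∈ B₁, u j = 0 then 1 else 0)
               + 2 ^ B₂.card * (if ∀ j ∈ B₂, u j = 0 then 1 else 0)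
               - 2 ^ (B₁ ∩ B₂).card * (if ∀ j ∈ B₁ ∩ B₂, u j = 0 then 1 else 0)
               - 1) := by
  have hf0 : f 0 ≠ 1 := by simp [hf, supp]
  have hwalsh := sum_neg_one_pow_ip_of_hierarchical hmn.le hB₁ hB₂ hf
  refine ⟨wtF_zero_zero f, fun u hu => wtF_zero_of_ne_zero f hu, ?_, fun u hu => ?_⟩
  · rw [wtF_one hf0, wtF_zero_zero, hwalsh]
    simp only [Pi.zero_apply, implies_true, ↓reduceIte, wtLow_zero, pow_zero, mul_one, one_mul]
    ring
  · rw [wtF_one hf0, wtF_zero_of_ne_zero f hu, hwalsh]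
    push_cast
    ring

/-- **Theorem 5.7(2).**  Let `1 ≤ m < n`, let `B₁, B₂ ⊆ [n] ∖ [m]` be nonempty and
incomparable, and let `f` be the indicator of the nonempty down-closed subsets of
`ℍ(m,n)` contained in `[m]∪B₁` or in `[m]∪B₂`.  Then: `wt(c_f(0,0)) = 0`;
`wt(c_f(0,u)) = 2^{n−1}` for `u ≠ 0`;
`wt(c_f(1,0)) = 2^m − 2 + 2^{|B₁|} + 2^{|B₂|} − 2^{|B₁∩B₂|}`; and for nonzero
`u = (v,w)`,
`wt(c_f(1,u)) = 2^{n−1} − 1 + 2^m·χ₀ + (−1)^{wt(v)}·(2^{|B₁|}χ₁ + 2^{|B₂|}χ₂ − 2^{|B₁∩B₂|}χ₁₂ − 1)`. -/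
theorem stmt_11 (n m : ℕ) (hm : 1 ≤ m) (hmn : m < n)
    (B₁ B₂ : Finset (Fin n))
    (hB₁ne : B₁.Nonempty) (hB₂ne : B₂.Nonempty)
    (hB₁ : ∀ j ∈ B₁, m ≤ (j : ℕ)) (hB₂ : ∀ j ∈ B₂, m ≤ (j : ℕ))
    (h12 : ¬ B₁ ⊆ B₂) (h21 : ¬ B₂ ⊆ B₁)
    (f : (Fin n → ZMod 2) → ZMod 2)
    (hf : ∀ x, f x = 1 ↔
      ((supp x).Nonempty ∧ HDownClosed n m (supp x) ∧
        (supp x ⊆ lowSet n m ∪ B₁ ∨ supp x ⊆ lowSet n m ∪ B₂))) :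
    wtF f 0 0 = 0
    ∧ (∀ u : Fin n → ZMod 2, u ≠ 0 → wtF f 0 u = 2 ^ (n - 1))
    ∧ (wtF f 1 0 : ℤ) = 2 ^ m - 2 + 2 ^ B₁.card + 2 ^ B₂.card - 2 ^ (B₁ ∩ B₂).card
    ∧ ∀ u : Fin n → ZMod 2, u ≠ 0 →
        (wtF f 1 u : ℤ) =
          2 ^ (n - 1) - 1
          + 2 ^ m * (if ∀ i : Fin n, (i : ℕ) < m → u i = 0 then 1 else 0)
          + (-1) ^ (wtLow n m u) *
              (2 ^ B₁.card * (if ∀ j ∈ B₁, u j = 0 then 1 else 0)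
               + 2 ^ B₂.card * (if ∀ j ∈ B₂, u j = 0 then 1 else 0)
               - 2 ^ (B₁ ∩ B₂).card * (if ∀ j ∈ B₁ ∩ B₂, u j = 0 then 1 else 0)
               - 1) :=
  stmt_11_general n m hmn B₁ B₂ hB₁ hB₂ f hf
end

section
/- Let n ≥ 3, m = 1, and B = [n]∖{1} (so |B| = n − 1). Set D = {x ∈ 𝔽₂ⁿ : supp(x) is not a down-closed subset of ℍ(1,n)}. Then the code C_D is a binary Griesmer code with parameters [2^{n−1} − 1, n − 1, 2^{n−2}]: its length is |D| = 2^{n−1} − 1; the set {c_{D,u} : u ∈ 𝔽₂ⁿ} has exactly 2^{n−1} elements (so C_D has dimension n − 1); the minimum weight of a nonzero codeword is 2^{n−2}; and Σ_{i=0}^{n−2} ⌈2^{n−2}/2^i⌉ = 2^{n−1} − 1, i.e., the Griesmer bound is met with equality. -/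
open Finset

/-! For `m = 1` a support is down-closed exactly when it is empty or contains the bottom
element, so `D` is the set of nonzero vectors `(0, y)` with `y ∈ 𝔽₂^{n-1}`. The codeword `c_{D,u}`
only sees the tail `v` of `u` and is the simplex-code word `y ↦ v · y`; for `v ≠ 0` the functional
`v ·` maps onto `𝔽₂`, so its two fibres have equal size and the weight is `2^{n-2}`. In the
Griesmer sum `2^i ∣ 2^{n-2}` makes every ceiling exact, leaving a geometric series. -/

open Matrix

lemma vecCons_right_injective {α : Type*} {k : ℕ} (a : α) :
    Function.Injective (vecCons a : (Fin k → α) → Fin (k + 1) → α) :=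
  fun _ _ h => (vecCons_inj.mp h).2

lemma two_mul_card_dotProduct_eq_one {α : Type*} [Fintype α] [DecidableEq α]
    (v : α → ZMod 2) (hv : v ≠ 0) :
    2 * #{y : α → ZMod 2 | v ⬝ᵥ y = 1} = 2 ^ Fintype.card α := by
  let f : (α → ZMod 2) →+ ZMod 2 := AddMonoidHom.mk' (v ⬝ᵥ ·) (dotProduct_add v)
  obtain ⟨j, hj⟩ := Function.ne_iff.mp hv
  have hvj : v j = 1 := (by decide : ∀ a : ZMod 2, a ≠ 0 → a = 1) _ hj
  have hsurj : Function.Surjective f := fun a =>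
    ⟨Pi.single j a, by simp [f, dotProduct_single, hvj]⟩
  have hfiber := AddMonoidHom.card_fiber_eq_of_mem_range f (hsurj 1) (hsurj 0)
  have hne : ∀ y, f y ≠ 1 ↔ f y = 0 := by
    intro y; generalize f y = a; revert a; decide
  have hsplit := Finset.card_filter_add_card_filter_not (s := univ) (fun y => f y = 1)
  simp only [hne, card_univ, Fintype.card_fun, ZMod.card] at hsplit
  change 2 * #{y | f y = 1} = _
  omega

lemma sum_range_ceilDiv_two_pow (j : ℕ) :
    ∑ i ∈ range (j + 1), (2 ^ j + 2 ^ i - 1) / 2 ^ i = 2 ^ (j + 1) - 1 := by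
  have hterm : ∀ i ∈ range (j + 1), (2 ^ j + 2 ^ i - 1) / 2 ^ i = 2 ^ (j - i) := by
    intro i hi
    have hpow : 2 ^ j = 2 ^ i * 2 ^ (j - i) := by
      rw [← pow_add, Nat.add_sub_cancel' (Nat.lt_succ_iff.mp (mem_range.mp hi))]
    rw [hpow, Nat.add_sub_assoc Nat.one_le_two_pow, Nat.mul_add_div (by positivity),
      Nat.div_eq_of_lt (Nat.sub_lt (by positivity) Nat.one_pos), add_zero]
  calc ∑ i ∈ range (j + 1), (2 ^ j + 2 ^ i - 1) / 2 ^ i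
      = ∑ i ∈ range (j + 1), 2 ^ (j + 1 - 1 - i) := sum_congr rfl hterm
    _ = ∑ i ∈ range (j + 1), 2 ^ i := sum_range_reflect (2 ^ ·) (j + 1)
    _ = 2 ^ (j + 1) - 1 := by rw [Nat.geomSum_eq le_rfl, Nat.div_one]

lemma hDownClosed_one_iff {n : ℕ} [NeZero n] (S : Finset (Fin n)) :
    HDownClosed n 1 S ↔ S = ∅ ∨ (0 : Fin n) ∈ S := by
  have bottom_le : ∀ j : Fin n, Hle n 1 0 j := fun j => by
    rcases eq_or_ne (0 : Fin n) j with h | h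
    · exact Or.inl h
    · exact Or.inr ⟨by simp, Nat.one_le_iff_ne_zero.mpr (Fin.val_ne_zero_iff.mpr h.symm)⟩
  constructor
  · intro hS
    rcases S.eq_empty_or_nonempty with h | ⟨j, hj⟩
    · exact Or.inl h
    · exact Or.inr (hS 0 j (bottom_le j) hj)
  · rintro (rfl | h0) i j hij hj
    · simp at hj
    · rcases hij with rfl | ⟨hi, -⟩
      · exact hj
      · rwa [show i = 0 from Fin.ext (Nat.lt_one_iff.mp hi)]

lemma supp_eq_empty_iff {n : ℕ} (x : Fin n → ZMod 2) : supp x = ∅ ↔ x = 0 := by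
  simp [supp, Finset.filter_eq_empty_iff, funext_iff]

lemma not_hDownClosed_one_supp_iff {n : ℕ} [NeZero n] (x : Fin n → ZMod 2) :
    ¬ HDownClosed n 1 (supp x) ↔ x 0 = 0 ∧ x ≠ 0 := by
  rw [hDownClosed_one_iff, supp_eq_empty_iff]
  simp [supp, and_comm]

def zeroHeadNonzero (k : ℕ) : Finset (Fin (k + 1) → ZMod 2) :=
  (univ.erase 0).image (vecCons 0)

lemma mem_zeroHeadNonzero {k : ℕ} (x : Fin (k + 1) → ZMod 2) :
    x ∈ zeroHeadNonzero k ↔ x 0 = 0 ∧ x ≠ 0 := by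
  obtain ⟨a, y, rfl⟩ : ∃ a y, x = vecCons a y := ⟨_, _, (cons_head_tail x).symm⟩
  simp [zeroHeadNonzero, vecCons_inj, eq_comm]
  tauto

lemma filter_not_hDownClosed_one_eq (k : ℕ) :
    (univ.filter fun x : Fin (k + 1) → ZMod 2 => ¬ HDownClosed (k + 1) 1 (supp x))
      = zeroHeadNonzero k := by
  ext x
  rw [mem_zeroHeadNonzero, mem_filter, not_hDownClosed_one_supp_iff]
  exact and_iff_right (mem_univ x)

lemma ip_vecCons_zero {k : ℕ} (u : Fin (k + 1) → ZMod 2) (y : Fin k → ZMod 2) :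
    ip u (vecCons 0 y) = vecTail u ⬝ᵥ y := by
  rw [ip, ← dotProduct, dotProduct_cons, mul_zero, zero_add]

lemma card_zeroHeadNonzero (k : ℕ) :
    (zeroHeadNonzero k).card = 2 ^ k - 1 := by
  rw [zeroHeadNonzero, card_image_of_injective _ (vecCons_right_injective 0),
    card_erase_of_mem (mem_univ 0), card_univ, Fintype.card_fun, ZMod.card, Fintype.card_fin]

lemma wtD_zeroHeadNonzero {k : ℕ} (u : Fin (k + 1) → ZMod 2) :
    wtD (zeroHeadNonzero k) u = #{y : Fin k → ZMod 2 | vecTail u ⬝ᵥ y = 1} := by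
  rw [wtD, zeroHeadNonzero, filter_image, card_image_of_injective _ (vecCons_right_injective 0)]
  simp only [ip_vecCons_zero]
  rw [filter_erase, erase_eq_of_notMem (by simp)]

lemma card_codewords_zeroHeadNonzero (k : ℕ) :
    (univ.image fun u : Fin (k + 1) → ZMod 2 =>
      fun x : {y : Fin (k + 1) → ZMod 2 // y ∈ zeroHeadNonzero k} =>
        ip u x.1).card = 2 ^ k := by
  let G : (Fin k → ZMod 2) → {y // y ∈ zeroHeadNonzero k} → ZMod 2 :=
    fun v x => v ⬝ᵥ vecTail x.1
  have hfactor : (fun u : Fin (k + 1) → ZMod 2 =>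
      fun x : {y // y ∈ zeroHeadNonzero k} => ip u x.1) = G ∘ vecTail := by
    funext u ⟨x, hx⟩
    obtain ⟨y, -, rfl⟩ := mem_image.mp hx
    simp [G, ip_vecCons_zero]
  have hG : Function.Injective G := fun v w h => funext fun j => by
    have hx : vecCons 0 (Pi.single j 1) ∈ zeroHeadNonzero k := mem_image_of_mem _ (by simp)
    simpa [G, dotProduct_single] using congrFun h ⟨_, hx⟩
  have htail : Function.Surjective (vecTail : (Fin (k + 1) → ZMod 2) → Fin k → ZMod 2) :=
    fun v => ⟨vecCons 0 v, tail_cons 0 v⟩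
  have key : univ.image (G ∘ vecTail) = univ.image G := by
    rw [← image_image, image_univ_of_surjective htail]
  rw [hfactor, key, card_image_of_injective _ hG, card_univ, Fintype.card_fun, ZMod.card,
    Fintype.card_fin]

lemma wtD_zeroHeadNonzero_of_vecTail_eq_zero {k : ℕ} (u : Fin (k + 1) → ZMod 2)
    (hu : vecTail u = 0) : wtD (zeroHeadNonzero k) u = 0 := by
  simp [wtD_zeroHeadNonzero, hu]

lemma wtD_zeroHeadNonzero_of_vecTail_ne_zero {k : ℕ} (u : Fin (k + 2) → ZMod 2)
    (hu : vecTail u ≠ 0) : wtD (zeroHeadNonzero (k + 1)) u = 2 ^ k := by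
  have h := two_mul_card_dotProduct_eq_one _ hu
  rw [Fintype.card_fin, pow_succ] at h
  rw [wtD_zeroHeadNonzero]
  omega

/-- **Theorem 6.1(2).**  For `n ≥ 3`, `m = 1` and `B = [n] ∖ [1]`, the code `C_D`
with `D = {x : supp(x) is not down-closed in ℍ(1,n)}` is a Griesmer code with
parameters `[2^{n−1} − 1, n − 1, 2^{n−2}]`: the length is `|D| = 2^{n−1} − 1`,
there are exactly `2^{n−1}` distinct codewords `c_{D,u}` (dimension `n − 1`), the
minimum nonzero codeword weight is `2^{n−2}`, and
`Σ_{i=0}^{n−2} ⌈2^{n−2}/2ⁱ⌉ = 2^{n−1} − 1`. -/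
theorem stmt_13 (n : ℕ) (hn : 3 ≤ n)
    (D : Finset (Fin n → ZMod 2))
    (hD : D = Finset.univ.filter (fun x => ¬ HDownClosed n 1 (supp x))) :
    D.card = 2 ^ (n - 1) - 1
    ∧ (Finset.univ.image
        (fun u : Fin n → ZMod 2 =>
          fun x : {y : Fin n → ZMod 2 // y ∈ D} => ip u x.1)).card = 2 ^ (n - 1)
    ∧ (∀ u : Fin n → ZMod 2, wtD D u ≠ 0 → 2 ^ (n - 2) ≤ wtD D u)
    ∧ (∃ u : Fin n → ZMod 2, wtD D u = 2 ^ (n - 2))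
    ∧ ∑ i ∈ Finset.range (n - 1), (2 ^ (n - 2) + 2 ^ i - 1) / 2 ^ i
        = 2 ^ (n - 1) - 1 := by
  obtain ⟨j, rfl⟩ : ∃ j, n = j + 2 := ⟨n - 2, by omega⟩
  rw [filter_not_hDownClosed_one_eq (j + 1)] at hD
  subst hD
  refine ⟨card_zeroHeadNonzero _, card_codewords_zeroHeadNonzero _, fun u hu => ?_,
    ⟨vecCons 0 (Pi.single 0 1), ?_⟩, sum_range_ceilDiv_two_pow _⟩
  · by_cases h : vecTail u = 0
    · exact absurd (wtD_zeroHeadNonzero_of_vecTail_eq_zero u h) hu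
    · exact (wtD_zeroHeadNonzero_of_vecTail_ne_zero u h).ge
  · exact wtD_zeroHeadNonzero_of_vecTail_ne_zero _ (by simp)
end
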